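/- arXiv:1312.1213 — 6 statements merged into one kernel-verified Lean document; each statement's English description precedes it below -/
import Mathlib

section
/- For any positive integers r, d, q: any sequence of n ≥ (⌈q/r⌉ + 2)·(2rd+1)^d vectors in ℤ^d, each with all coordinates in {-r,...,r}, whose total sum has all coordinates in {-q,...,q}, contains a nonempty proper subsequence whose sum is the zero vector. -/
/-!
Pad the sequence with `⌈q / r⌉` vectors of sup-norm at most `r` so that it sums to zero. By the
Steinitz lemma in the form of Grinberg and Sevastyanov, the padded sequence can be ordered so that
every partial sum has sup-norm at most `d r`. These partial sums are integer points of a box with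
`(2 r d + 1) ^ d` points, so `⌈q / r⌉ + 3` of them coincide, which cuts out `⌈q / r⌉ + 2` disjoint
nonempty zero-sum blocks. At most `⌈q / r⌉` blocks meet the padding, so two blocks consist of
original vectors only: either is the required subsequence, and the other shows that it is proper.

For the Steinitz lemma, give a set `S` of indices Steinitz weights if there are `μ ∈ [0, 1]^S`
with `∑ μ = |S| - dim E` and `∑ μᵢ vᵢ = 0`. Then `∑_S v = ∑_S (1 - μᵢ) vᵢ` has norm at most
`r dim E`. A set with Steinitz weights and more than `dim E` elements loses an element and keeps
them: rescale `μ` to total mass `|S| - dim E - 1` and pass to a vertex of the polytope of such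
weights; a vertex has at most `dim E + 1` fractional coordinates, which forces one to vanish.
-/

open Finset Function Module

section FeasibleWeight

variable {𝕜 ι E : Type*} [Field 𝕜] [AddCommGroup E] [Module 𝕜 E]

theorem exists_sum_smul_eq_zero_of_finrank_add_one_lt [FiniteDimensional 𝕜 E] (v : ι → E)
    {F : Finset ι} (hF : finrank 𝕜 E + 1 < #F) :
    ∃ c : ι → 𝕜, (∀ i ∉ F, c i = 0) ∧ (∃ i ∈ F, c i ≠ 0) ∧
      ∑ i ∈ F, c i = 0 ∧ ∑ i ∈ F, c i • v i = 0 := by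
  classical
  have hdep : ¬ LinearIndepOn 𝕜 (fun i => (v i, (1 : 𝕜))) (F : Set ι) := fun h => by
    have := h.fintype_card_le_finrank
    simp [finrank_prod] at this
    omega
  simp only [linearIndepOn_finset_iff, not_forall, exists_prop] at hdep
  obtain ⟨f, hf, i, hi, hfi⟩ := hdep
  refine ⟨fun i => if i ∈ F then f i else 0, fun i hi => if_neg hi, ⟨i, hi, by simpa [hi]⟩,
    ?_, ?_⟩
  · simpa [sum_ite_mem, Prod.snd_sum] using congrArg Prod.snd hf
  · simpa [sum_ite_mem, Prod.fst_sum] using congrArg Prod.fst hf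

variable [LinearOrder 𝕜]

/-- For `a ∈ [0, 1]` and `c ≠ 0`, the largest `s` with `a + s * c ∈ [0, 1]`. -/
def exitTime (a c : 𝕜) : 𝕜 := if 0 < c then (1 - a) / c else -a / c

def IsFeasibleWeight (v : ι → E) (S : Finset ι) (s : 𝕜) (w : E) (μ : ι → 𝕜) : Prop :=
  (∀ i ∈ S, μ i ∈ Set.Icc 0 1) ∧ ∑ i ∈ S, μ i = s ∧ ∑ i ∈ S, μ i • v i = w

def fractionalIndices (S : Finset ι) (μ : ι → 𝕜) : Finset ι := {i ∈ S | μ i ∈ Set.Ioo 0 1}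

theorem add_exitTime_mul_eq_zero_or_one (a : 𝕜) {c : 𝕜} (hc : c ≠ 0) :
    a + exitTime a c * c = 0 ∨ a + exitTime a c * c = 1 := by
  unfold exitTime
  split_ifs
  · right
    rw [div_mul_cancel₀ _ hc]
    ring
  · left
    rw [div_mul_cancel₀ _ hc]
    ring

variable [IsStrictOrderedRing 𝕜]

theorem exitTime_pos {a c : 𝕜} (ha : a ∈ Set.Ioo 0 1) (hc : c ≠ 0) : 0 < exitTime a c := by
  obtain ⟨ha0, ha1⟩ := ha
  unfold exitTime
  split_ifs with h
  · exact div_pos (by linarith) h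
  · exact div_pos_of_neg_of_neg (by linarith) (lt_of_le_of_ne (not_lt.1 h) hc)

theorem add_mul_mem_Icc_of_le_exitTime {a c s : 𝕜} (ha : a ∈ Set.Icc 0 1) (hs0 : 0 ≤ s)
    (hs : s ≤ exitTime a c) : a + s * c ∈ Set.Icc 0 1 := by
  obtain ⟨ha0, ha1⟩ := ha
  unfold exitTime at hs
  split_ifs at hs with h
  · have : s * c ≤ 1 - a := (le_div_iff₀ h).1 hs
    constructor <;> nlinarith
  · rcases (not_lt.1 h).lt_or_eq with h | rfl
    · have : -a ≤ s * c := (le_div_iff_of_neg h).1 hs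
      constructor <;> nlinarith
    · simpa using ⟨ha0, ha1⟩

theorem IsFeasibleWeight.exists_card_fractionalIndices_lt [FiniteDimensional 𝕜 E] {v : ι → E}
    {S : Finset ι} {s : 𝕜} {w : E} {μ : ι → 𝕜} (hμ : IsFeasibleWeight v S s w μ)
    (hF : finrank 𝕜 E + 1 < #(fractionalIndices S μ)) :
    ∃ μ', IsFeasibleWeight v S s w μ' ∧ #(fractionalIndices S μ') < #(fractionalIndices S μ) := by
  classical
  obtain ⟨h01, hs, hw⟩ := hμ
  set F := fractionalIndices S μ
  have hFS : F ⊆ S := filter_subset _ _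
  obtain ⟨c, hc0, ⟨i₁, hi₁, hci₁⟩, hcs, hcv⟩ := exists_sum_smul_eq_zero_of_finrank_add_one_lt v hF
  have hcF : ∀ i, c i ≠ 0 → i ∈ F := fun i hi => by_contra fun h => hi (hc0 i h)
  set G := {i ∈ F | c i ≠ 0}
  have hG : G.Nonempty := ⟨i₁, mem_filter.2 ⟨hi₁, hci₁⟩⟩
  obtain ⟨i₀, hi₀, ht⟩ := G.exists_mem_eq_inf' hG fun i => exitTime (μ i) (c i)
  set t := G.inf' hG fun i => exitTime (μ i) (c i)
  obtain ⟨hi₀F, hci₀⟩ := mem_filter.1 hi₀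
  have ht0 : 0 < t := ht ▸ exitTime_pos (mem_filter.1 hi₀F).2 hci₀
  have hcS : ∑ i ∈ S, c i = 0 := by
    rwa [← sum_subset hFS fun i _ hi => hc0 i hi]
  have hcvS : ∑ i ∈ S, c i • v i = 0 := by
    rwa [← sum_subset hFS fun i _ hi => by simp [hc0 i hi]]
  refine ⟨fun i => μ i + t * c i, ⟨fun i hi => ?_, ?_, ?_⟩, ?_⟩
  · by_cases hci : c i = 0
    · simpa [hci] using h01 i hi
    · exact add_mul_mem_Icc_of_le_exitTime (h01 i hi) ht0.le
        (G.inf'_le _ (mem_filter.2 ⟨hcF i hci, hci⟩))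
  · simp [sum_add_distrib, ← mul_sum, hcS, hs]
  · simp [add_smul, mul_smul, sum_add_distrib, ← smul_sum, hcvS, hw]
  · refine (card_le_card fun i hi => mem_erase.2 ⟨?_, ?_⟩).trans_lt (card_erase_lt_of_mem hi₀F)
    · rintro rfl
      have := (mem_filter.1 hi).2
      rcases add_exitTime_mul_eq_zero_or_one (μ i) hci₀ with h | h <;>
        · rw [← ht] at h
          simp [h] at this
    · by_cases hci : c i = 0
      · simpa [F, fractionalIndices, hci] using hi
      · exact hcF i hci

theorem IsFeasibleWeight.exists_card_fractionalIndices_le [FiniteDimensional 𝕜 E] {v : ι → E}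
    {S : Finset ι} {s : 𝕜} {w : E} {μ : ι → 𝕜} (hμ : IsFeasibleWeight v S s w μ) :
    ∃ μ', IsFeasibleWeight v S s w μ' ∧ #(fractionalIndices S μ') ≤ finrank 𝕜 E + 1 := by
  induction hn : #(fractionalIndices S μ) using Nat.strong_induction_on generalizing μ with
  | _ n ih =>
    by_cases h : n ≤ finrank 𝕜 E + 1
    · exact ⟨μ, hμ, hn ▸ h⟩
    · obtain ⟨μ', hμ', hlt⟩ := hμ.exists_card_fractionalIndices_lt (by omega)
      exact ih _ (hn ▸ hlt) hμ' rfl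

theorem exists_eq_zero_of_card_fractionalIndices_le {S : Finset ι} {μ : ι → 𝕜} {d : ℕ}
    (h01 : ∀ i ∈ S, μ i ∈ Set.Icc 0 1) (hF : #(fractionalIndices S μ) ≤ d + 1)
    (hsum : ∑ i ∈ S, μ i ≤ #S - (d + 1)) : ∃ i ∈ S, μ i = 0 := by
  classical
  by_contra! h
  set F := fractionalIndices S μ
  have hFS : F ⊆ S := filter_subset _ _
  have hone : ∀ i ∈ S \ F, μ i = 1 := by
    intro i hi
    obtain ⟨hiS, hiF⟩ := mem_sdiff.1 hi
    by_contra h1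
    exact hiF (mem_filter.2 ⟨hiS, (h01 i hiS).1.lt_of_ne' (h i hiS), (h01 i hiS).2.lt_of_ne h1⟩)
  have hS : ∑ i ∈ S, μ i = #S - #F + ∑ i ∈ F, μ i := by
    rw [← sum_sdiff hFS, sum_congr rfl hone, sum_const, nsmul_one, card_sdiff_of_subset hFS,
      Nat.cast_sub (card_le_card hFS)]
  have hF' : (#F : 𝕜) ≤ d + 1 := by exact_mod_cast hF
  rcases F.eq_empty_or_nonempty with hF0 | hF0
  · simp only [hF0, card_empty, sum_empty, Nat.cast_zero] at hS
    linarith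
  · have : 0 < ∑ i ∈ F, μ i := sum_pos (fun i hi => (mem_filter.1 hi).2.1) hF0
    linarith

end FeasibleWeight

theorem norm_sum_le_of_card_le {ι E : Type*} [SeminormedAddCommGroup E] {v : ι → E}
    {S : Finset ι} {r : ℝ} {d : ℕ} (hv : ∀ i, ‖v i‖ ≤ r) (hr : 0 ≤ r) (hS : #S ≤ d) :
    ‖∑ i ∈ S, v i‖ ≤ d * r :=
  calc ‖∑ i ∈ S, v i‖ ≤ ∑ _i ∈ S, r := norm_sum_le_of_le _ fun i _ => hv i
    _ = #S * r := by rw [sum_const, nsmul_eq_mul]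
    _ ≤ d * r := by gcongr

section Steinitz

variable {ι E : Type*} [NormedAddCommGroup E] [NormedSpace ℝ E] {v : ι → E}

def HasSteinitzWeight (v : ι → E) (S : Finset ι) : Prop :=
  ∃ μ : ι → ℝ, IsFeasibleWeight v S ((#S : ℝ) - finrank ℝ E) 0 μ

theorem HasSteinitzWeight.norm_sum_le {S : Finset ι} {r : ℝ} (h : HasSteinitzWeight v S)
    (hv : ∀ i, ‖v i‖ ≤ r) : ‖∑ i ∈ S, v i‖ ≤ finrank ℝ E * r := by
  obtain ⟨μ, h01, hs, hw⟩ := h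
  calc ‖∑ i ∈ S, v i‖ = ‖∑ i ∈ S, (1 - μ i) • v i‖ := by
        simp [sub_smul, sum_sub_distrib, hw]
    _ ≤ ∑ i ∈ S, (1 - μ i) * r := norm_sum_le_of_le _ fun i hi => by
        have : 0 ≤ 1 - μ i := sub_nonneg.2 (h01 i hi).2
        rw [norm_smul, Real.norm_of_nonneg this]
        exact mul_le_mul_of_nonneg_left (hv i) this
    _ = finrank ℝ E * r := by
        rw [← sum_mul, sum_sub_distrib, hs]
        simp

theorem hasSteinitzWeight_univ [Fintype ι] (hsum : ∑ i, v i = 0)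
    (hcard : finrank ℝ E ≤ Fintype.card ι) : HasSteinitzWeight v univ := by
  have hdN : (finrank ℝ E : ℝ) ≤ Fintype.card ι := by exact_mod_cast hcard
  refine ⟨fun _ => (Fintype.card ι - finrank ℝ E) / Fintype.card ι, fun i _ => ⟨?_, ?_⟩, ?_, ?_⟩
  · exact div_nonneg (by linarith) (Nat.cast_nonneg _)
  · exact div_le_one_of_le₀ (by simp) (Nat.cast_nonneg _)
  · rw [sum_const, card_univ, nsmul_eq_mul]
    refine mul_div_cancel_of_imp' fun hN => ?_
    have hd : (finrank ℝ E : ℝ) = 0 := le_antisymm (hN ▸ hdN) (Nat.cast_nonneg _)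
    rw [hN, hd, sub_zero]
  · rw [← smul_sum, hsum, smul_zero]

theorem HasSteinitzWeight.exists_erase [FiniteDimensional ℝ E] [DecidableEq ι] {S : Finset ι}
    (h : HasSteinitzWeight v S) (hS : finrank ℝ E < #S) :
    ∃ i ∈ S, HasSteinitzWeight v (S.erase i) := by
  obtain ⟨μ, h01, hs, hw⟩ := h
  set d := finrank ℝ E
  have hdS : (d : ℝ) + 1 ≤ #S := by exact_mod_cast hS
  set α : ℝ := (#S - (d + 1)) / (#S - d)
  have hα : α ∈ Set.Icc 0 1 :=
    ⟨div_nonneg (by linarith) (by linarith), div_le_one_of_le₀ (by linarith) (by linarith)⟩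
  have hαμ : IsFeasibleWeight v S ((#S : ℝ) - (d + 1)) 0 (α • μ) := by
    refine ⟨fun i hi => ⟨mul_nonneg hα.1 (h01 i hi).1, mul_le_one₀ hα.2 (h01 i hi).1 (h01 i hi).2⟩,
      ?_, by simp [mul_smul, ← smul_sum, hw]⟩
    rw [Pi.smul_def]
    simp only [smul_eq_mul, ← mul_sum, hs, α]
    field_simp [show (#S : ℝ) - d ≠ 0 by linarith]
  obtain ⟨μ', ⟨h01', hs', hw'⟩, hF⟩ := hαμ.exists_card_fractionalIndices_le
  obtain ⟨i, hi, hμi⟩ := exists_eq_zero_of_card_fractionalIndices_le h01' hF hs'.le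
  refine ⟨i, hi, μ', fun j hj => h01' j (mem_of_mem_erase hj), ?_, ?_⟩
  · rw [sum_erase _ hμi, hs', card_erase_of_mem hi, Nat.cast_pred (card_pos.2 ⟨i, hi⟩)]
    ring
  · rw [sum_erase _ (by simp [hμi]), hw']

end Steinitz

theorem exists_monotone_chain_of_exists_erase {ι : Type*} [DecidableEq ι] {P : Finset ι → Prop}
    (hP : ∀ S, P S → S.Nonempty → ∃ i ∈ S, P (S.erase i)) {S : Finset ι} (hS : P S) :
    ∃ A : ℕ → Finset ι, Monotone A ∧ (∀ k ≤ #S, #(A k) = k) ∧ A #S = S ∧ ∀ k, P (A k) := by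
  induction hn : #S generalizing S with
  | zero => exact ⟨fun _ => S, monotone_const, fun k hk => by simp_all, rfl, fun _ => hS⟩
  | succ n ih =>
    obtain ⟨i, hi, hPi⟩ := hP S hS (card_pos.1 (by omega))
    obtain ⟨A, hA, hcard, htop, hPA⟩ := ih hPi (by rw [card_erase_of_mem hi, hn]; rfl)
    refine ⟨fun k => if k ≤ n then A k else S, fun k l hkl => ?_, fun k hk => ?_, by simp,
      fun k => ?_⟩
    · dsimp only
      split_ifs with hk hl hl
      · exact hA hkl
      · exact (hA hk).trans (htop ▸ erase_subset i S)
      · omega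
      · exact le_rfl
    · dsimp only
      split_ifs with h
      · exact hcard k h
      · rw [hn]
        omega
    · dsimp only
      split_ifs
      exacts [hPA k, hS]

theorem exists_monotone_chain_norm_sum_le {ι E : Type*} [Fintype ι] [NormedAddCommGroup E]
    [NormedSpace ℝ E] [FiniteDimensional ℝ E] {v : ι → E} {r : ℝ} (hr : 0 ≤ r)
    (hv : ∀ i, ‖v i‖ ≤ r) (hsum : ∑ i, v i = 0) :
    ∃ A : ℕ → Finset ι, Monotone A ∧ (∀ k ≤ Fintype.card ι, #(A k) = k) ∧
      ∀ k, ‖∑ i ∈ A k, v i‖ ≤ finrank ℝ E * r := by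
  classical
  have hP : ∀ S : Finset ι, #S ≤ finrank ℝ E ∨ HasSteinitzWeight v S → S.Nonempty →
      ∃ i ∈ S, #(S.erase i) ≤ finrank ℝ E ∨ HasSteinitzWeight v (S.erase i) := by
    rintro S hS ⟨i, hi⟩
    by_cases hd : #S ≤ finrank ℝ E
    · exact ⟨i, hi, .inl (card_erase_le.trans hd)⟩
    · obtain ⟨j, hj, h⟩ := (hS.resolve_left hd).exists_erase (not_le.1 hd)
      exact ⟨j, hj, .inr h⟩
  have huniv : #(univ : Finset ι) ≤ finrank ℝ E ∨ HasSteinitzWeight v univ := by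
    rw [card_univ]
    exact (le_or_gt _ _).imp_right fun h => hasSteinitzWeight_univ hsum h.le
  obtain ⟨A, hA, hcard, -, hPA⟩ := exists_monotone_chain_of_exists_erase hP huniv
  refine ⟨A, hA, by simpa using hcard, fun k => ?_⟩
  rcases hPA k with h | h
  · exact norm_sum_le_of_card_le hv hr h
  · exact h.norm_sum_le hv

theorem exists_pairwise_disjoint_sum_eq_zero_of_monotone {ι M : Type*} [AddCommGroup M]
    {y : ι → M} {A : ℕ → Finset ι} {B : Finset M} {N m : ℕ} (hA : Monotone A)
    (hcard : ∀ k ≤ N, #(A k) = k) (hB : ∀ k ≤ N, ∑ i ∈ A k, y i ∈ B) (hN : m * #B ≤ N) :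
    ∃ D : Fin m → Finset ι, (∀ a, (D a).Nonempty) ∧ Pairwise (Disjoint on D) ∧
      ∀ a, ∑ i ∈ D a, y i = 0 := by
  classical
  obtain ⟨p, -, hp⟩ := exists_lt_card_fiber_of_mul_lt_card_of_maps_to
    (s := range (N + 1)) (f := fun k => ∑ i ∈ A k, y i) (n := m)
    (fun k hk => hB k (Nat.lt_succ_iff.1 (mem_range.1 hk))) (by rw [card_range, mul_comm]; omega)
  set e := orderEmbOfCardLe _ hp
  have he : ∀ a, e a ≤ N ∧ ∑ i ∈ A (e a), y i = p := fun a => by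
    simpa [Nat.lt_succ_iff] using orderEmbOfCardLe_mem _ hp a
  have hsub : ∀ {a b}, a ≤ b → A (e a) ⊆ A (e b) := fun h => hA (e.monotone h)
  refine ⟨fun a => A (e a.succ) \ A (e a.castSucc), fun a => ?_, ?_, fun a => ?_⟩
  · refine sdiff_nonempty.2 fun h => ?_
    have := card_le_card h
    rw [hcard _ (he _).1, hcard _ (he _).1] at this
    exact this.not_gt (e.strictMono Fin.castSucc_lt_succ)
  · refine (pairwise_disjoint_on _).2 fun a b hab => ?_
    exact disjoint_sdiff.mono_left (sdiff_subset.trans (hsub (Fin.succ_le_castSucc_iff.2 hab)))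
  · rw [sum_sdiff_eq_sub (hsub (Fin.castSucc_le_succ a)), (he _).2, (he _).2, sub_self]

theorem exists_pairwise_disjoint_sum_eq_zero {ι : Type*} [Fintype ι] {d r m : ℕ}
    {y : ι → Fin d → ℤ} (hy : ∀ i j, |y i j| ≤ r) (hsum : ∑ i, y i = 0)
    (hcard : m * (2 * r * d + 1) ^ d ≤ Fintype.card ι) :
    ∃ D : Fin m → Finset ι, (∀ a, (D a).Nonempty) ∧ Pairwise (Disjoint on D) ∧
      ∀ a, ∑ i ∈ D a, y i = 0 := by
  set v : ι → Fin d → ℝ := fun i j => y i j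
  have hv : ∀ i, ‖v i‖ ≤ r := fun i => (pi_norm_le_iff_of_nonneg (Nat.cast_nonneg r)).2 fun j => by
    simpa [v, ← Int.cast_abs] using (Int.cast_le (R := ℝ)).2 (hy i j)
  have hvsum : ∑ i, v i = 0 := funext fun j => by
    simpa [v] using congrArg (fun z : Fin d → ℤ => (z j : ℝ)) hsum
  obtain ⟨A, hA, hAcard, hAnorm⟩ := exists_monotone_chain_norm_sum_le (Nat.cast_nonneg r) hv hvsum
  set B : Finset (Fin d → ℤ) := Fintype.piFinset fun _ => Icc (-(d * r : ℤ)) (d * r)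
  have hB : #B = (2 * r * d + 1) ^ d := by
    have : (d * r : ℤ) + 1 - -(d * r) = (2 * r * d + 1 : ℕ) := by push_cast; ring
    simp only [B, Fintype.card_piFinset, Int.card_Icc, this, Int.toNat_natCast, prod_const,
      card_univ, Fintype.card_fin]
  refine exists_pairwise_disjoint_sum_eq_zero_of_monotone hA hAcard (fun k _ => ?_) (hB ▸ hcard)
  refine Fintype.mem_piFinset.2 fun j => mem_Icc.2 (abs_le.1 ?_)
  have := (norm_le_pi_norm (∑ i ∈ A k, v i) j).trans (hAnorm k)
  rw [finrank_fin_fun] at this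
  simp only [v, Finset.sum_apply, Real.norm_eq_abs] at this
  rw [Finset.sum_apply]
  exact_mod_cast this

theorem exists_fin_sum_eq_of_abs_le {r : ℤ} (hr : 0 ≤ r) :
    ∀ {t : ℕ} {a : ℤ}, |a| ≤ t * r → ∃ u : Fin t → ℤ, (∀ i, |u i| ≤ r) ∧ ∑ i, u i = a
  | 0, a, h => ⟨finZeroElim, finZeroElim, by simp_all⟩
  | t + 1, a, h => by
    set c := max (-r) (min r a)
    have hc : |c| ≤ r := abs_le.2 ⟨le_max_left _ _, max_le (by linarith) (min_le_left _ _)⟩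
    obtain ⟨u, hu, hsum⟩ := exists_fin_sum_eq_of_abs_le hr (t := t) (a := a - c) <| by
      have htr : 0 ≤ (t : ℤ) * r := by positivity
      push_cast at h
      rw [abs_le] at h ⊢
      constructor <;> simp only [c, max_def, min_def] <;> split_ifs <;> linarith
    refine ⟨Fin.cons c u, Fin.cases (by simpa using hc) hu, ?_⟩
    simp [Fin.sum_univ_succ, hsum]

theorem exists_fin_sum_eq_of_forall_abs_le {κ : Type*} {r : ℤ} (hr : 0 ≤ r) {t : ℕ} {w : κ → ℤ}
    (hw : ∀ j, |w j| ≤ t * r) : ∃ u : Fin t → κ → ℤ, (∀ i j, |u i j| ≤ r) ∧ ∑ i, u i = w := by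
  choose u hu hsum using fun j => exists_fin_sum_eq_of_abs_le hr (hw j)
  exact ⟨fun i j => u j i, fun i j => hu j i, funext fun j => by simp [Finset.sum_apply, hsum]⟩

theorem exists_ne_toRight_eq_empty {α β : Type*} [Fintype β] {t : ℕ} (hβ : Fintype.card β ≤ t)
    {D : Fin (t + 2) → Finset (α ⊕ β)} (hD : Pairwise (Disjoint on D)) :
    ∃ a b, a ≠ b ∧ (D a).toRight = ∅ ∧ (D b).toRight = ∅ := by
  classical
  have hbad : #{a | ¬(D a).toRight = ∅} ≤ t := by
    refine (card_le_card_biUnion (f := fun a => (D a).toRight) (fun a _ b _ hab => ?_)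
      fun a ha => nonempty_iff_ne_empty.2 (mem_filter.1 ha).2).trans ((card_le_univ _).trans hβ)
    exact disjoint_left.2 fun j hja hjb =>
      disjoint_left.1 (hD hab) (mem_toRight.1 hja) (mem_toRight.1 hjb)
  have hgood : 1 < #{a | (D a).toRight = ∅} := by
    have := card_filter_add_card_filter_not (s := univ) fun a => (D a).toRight = ∅
    rw [card_univ, Fintype.card_fin] at this
    omega
  obtain ⟨a, ha, b, hb, hab⟩ := one_lt_card.1 hgood
  exact ⟨a, b, hab, (mem_filter.1 ha).2, (mem_filter.1 hb).2⟩

theorem stmt_1_general (r d q n : ℕ) (hr : 0 < r)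
    (hn : (⌈(q : ℚ) / r⌉₊ + 2) * (2 * r * d + 1) ^ d ≤ n)
    (x : Fin n → Fin d → ℤ)
    (hx : ∀ i j, |x i j| ≤ (r : ℤ))
    (hw : ∀ j, |∑ i, x i j| ≤ (q : ℤ)) :
    ∃ S : Finset (Fin n), S.Nonempty ∧ S ≠ Finset.univ ∧ ∑ i ∈ S, x i = 0 := by
  set t := ⌈(q : ℚ) / r⌉₊
  have hqt : (q : ℤ) ≤ t * r := by
    have := (div_le_iff₀ (by exact_mod_cast hr : (0 : ℚ) < r)).1 (Nat.le_ceil ((q : ℚ) / r))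
    exact_mod_cast this
  obtain ⟨u, hu, hu_sum⟩ := exists_fin_sum_eq_of_forall_abs_le (Nat.cast_nonneg r)
    (w := -∑ i, x i) (t := t) fun j => by simpa [Finset.sum_apply] using (hw j).trans hqt
  obtain ⟨D, hD_ne, hD, hD_sum⟩ := exists_pairwise_disjoint_sum_eq_zero (m := t + 2)
    (y := Sum.elim x u) (by rintro (i | i) j; exacts [hx i j, hu i j])
    (by simp [Fintype.sum_sum_type, hu_sum]) (by simpa using hn.trans (Nat.le_add_right n t))
  obtain ⟨a, b, hab, ha, hb⟩ := exists_ne_toRight_eq_empty (Fintype.card_fin t).le hD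
  refine ⟨(D a).toLeft, ?_, fun hS => ?_, ?_⟩
  · have := card_toLeft_add_card_toRight (u := D a)
    rw [ha, card_empty, add_zero] at this
    exact card_pos.1 (this ▸ (hD_ne a).card_pos)
  · obtain ⟨i | j, hz⟩ := hD_ne b
    · exact disjoint_left.1 (hD hab) (mem_toLeft.1 (hS ▸ mem_univ i)) hz
    · simpa [hb] using mem_toRight.2 hz
  · have := hD_sum a
    rw [← toLeft_disjSum_toRight (u := D a), ha, sum_disjSum] at this
    simpa using this

theorem stmt_1 (r d q n : ℕ) (hr : 0 < r) (hd : 0 < d) (hq : 0 < q)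
    (hn : (⌈(q : ℚ) / r⌉₊ + 2) * (2 * r * d + 1) ^ d ≤ n)
    (x : Fin n → Fin d → ℤ)
    (hx : ∀ i j, |x i j| ≤ (r : ℤ))
    (hw : ∀ j, |∑ i, x i j| ≤ (q : ℤ)) :
    ∃ S : Finset (Fin n), S.Nonempty ∧ S ≠ Finset.univ ∧ ∑ i ∈ S, x i = 0 :=
  stmt_1_general r d q n hr hn x hx hw
end

section
/- For any positive integers r, d, q: any sequence of n ≥ (⌈q/r⌉ + 2)·(2rd+1)^d vectors in ℤ^d with ℓ∞-norm at most r, whose sum z has ℓ∞-norm at most q, contains a subsequence of length at most (⌈q/r⌉ + 2)·(2rd+1)^d whose sum equals z. -/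
/-!
Steinitz lemma (Grinberg–Sevastyanov): vectors of norm at most `r` in a `d`-dimensional real
normed space that sum to zero can be ordered so that every prefix sum has norm at most `d r`.
The order is built from the back. A set `A` with `|A| > d` carries weights `w ∈ [0,1]^A` with
`∑ wᵢ = |A| - d` and `∑ wᵢ vᵢ = 0`. Moving such a weight along affine relations between its
fractional coordinates until one of them hits `0` or `1` leaves at most `d + 1` fractional
coordinates; doing this after scaling the total down to `|A| - d - 1` forces a zero coordinate,
and that element is removed last. The prefix sum over `A` is then `∑ (1 - wᵢ) vᵢ`, of norm at
most `d r`.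

For the theorem, pad the vectors by `m = ⌈q/r⌉` copies of `-z/m` and take a Steinitz chain of
the padded family. A prefix containing `j` padding vectors has its sum of original vectors within
`d r` of `j z / m` in every coordinate, so it is determined, up to `(m + 1) (2rd + 1)^d` choices,
by `j` and a point of a box of side `2rd + 1`. With `n + m + 1` prefixes, two nested prefixes
share these data, and their difference is a nonempty zero-sum set of original vectors. Deleting
such sets while more than `(m + 2) (2rd + 1)^d` vectors remain proves the claim.
-/

open Finset Module

lemma Finset.exists_chain_of_exists_erase {α : Type*} [DecidableEq α] {p : Finset α → Prop}
    (hp : ∀ A, p A → A.Nonempty → ∃ a ∈ A, p (A.erase a)) {A : Finset α} (hA : p A) :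
    ∃ 𝒞 : Finset (Finset α), IsChain (· ⊆ ·) (𝒞 : Set (Finset α)) ∧ #𝒞 = #A + 1 ∧
      ∀ B ∈ 𝒞, B ⊆ A ∧ p B := by
  induction A using Finset.strongInduction with
  | H A ih =>
  obtain rfl | hne := A.eq_empty_or_nonempty
  · exact ⟨{∅}, by simp, by simp, by simpa using hA⟩
  obtain ⟨a, ha, hpa⟩ := hp A hA hne
  obtain ⟨𝒞, hchain, hcard, h𝒞⟩ := ih _ (erase_ssubset ha) hpa
  have hA𝒞 : A ∉ 𝒞 := fun h => notMem_erase a A ((h𝒞 A h).1 ha)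
  refine ⟨insert A 𝒞, ?_, ?_, ?_⟩
  · rw [coe_insert]
    exact hchain.insert fun B hB _ => Or.inr ((h𝒞 B hB).1.trans (erase_subset a A))
  · rw [card_insert_of_notMem hA𝒞, hcard, card_erase_add_one ha]
  · simp only [mem_insert, forall_eq_or_imp, subset_refl, true_and]
    exact ⟨hA, fun B hB => ⟨(h𝒞 B hB).1.trans (erase_subset a A), (h𝒞 B hB).2⟩⟩

lemma IsChain.exists_ssubset_map_eq {α β : Type*} {𝒞 : Finset (Finset α)}
    (h𝒞 : IsChain (· ⊆ ·) (𝒞 : Set (Finset α))) {T : Finset β} {f : Finset α → β}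
    (hf : ∀ B ∈ 𝒞, f B ∈ T) (hT : #T < #𝒞) : ∃ B ∈ 𝒞, ∃ B' ∈ 𝒞, B ⊂ B' ∧ f B = f B' := by
  obtain ⟨B, hB, B', hB', hne, heq⟩ := exists_ne_map_eq_of_card_lt_of_maps_to hT hf
  rcases h𝒞 hB hB' hne with h | h
  · exact ⟨B, hB, B', hB', h.ssubset_of_ne hne, heq⟩
  · exact ⟨B', hB', B, hB, h.ssubset_of_ne hne.symm, heq.symm⟩

lemma Int.sub_ceil_sub_mem_Icc {S : ℤ} {y : ℝ} {c : ℕ} (h : |(S : ℝ) - y| ≤ c) :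
    S - ⌈y - c⌉ ∈ Icc (0 : ℤ) (2 * c) := by
  obtain ⟨h1, h2⟩ := abs_le.1 h
  have hlo : ⌈y - c⌉ ≤ S := Int.ceil_le.2 (by linarith)
  have hhi : (S : ℝ) - ⌈y - c⌉ ≤ 2 * c := by linarith [Int.le_ceil (y - c)]
  rw [mem_Icc]
  exact ⟨by omega, by exact_mod_cast hhi⟩

lemma Finset.toLeft_sdiff_toLeft_nonempty {α β : Type*} [DecidableEq α] {B B' : Finset (α ⊕ β)}
    (h : B ⊂ B') (hright : #B.toRight = #B'.toRight) : (B'.toLeft \ B.toLeft).Nonempty := by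
  have hR : B.toRight = B'.toRight :=
    eq_of_subset_of_card_le (toRight_subset_toRight h.subset) hright.ge
  rw [sdiff_nonempty]
  intro hL
  have hL' : B.toLeft = B'.toLeft := (toLeft_subset_toLeft h.subset).antisymm hL
  exact h.ne (by rw [← toLeft_disjSum_toRight (u := B), hL', hR, toLeft_disjSum_toRight])

namespace Steinitz

section LinearOrderedField

variable {𝕜 E ι : Type*} [Field 𝕜] [AddCommGroup E] [Module 𝕜 E]

lemma exists_affine_relation [FiniteDimensional 𝕜 E] (v : ι → E) {F : Finset ι}
    (hF : finrank 𝕜 E + 1 < #F) :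
    ∃ μ : ι → 𝕜, (∀ i ∉ F, μ i = 0) ∧ ∑ i ∈ F, μ i = 0 ∧ ∑ i ∈ F, μ i • v i = 0 ∧
      ∃ i ∈ F, μ i ≠ 0 := by
  classical
  have hdep : ¬LinearIndepOn 𝕜 (fun i => (v i, (1 : 𝕜))) (F : Set ι) := fun h => by
    have := h.linearIndependent.fintype_card_le_finrank
    simp only [coe_sort_coe, Fintype.card_coe, finrank_prod, finrank_self] at this
    omega
  obtain ⟨f, hf, i, hi, hfi⟩ := not_linearIndepOn_finset_iff.1 hdep
  refine ⟨fun j => if j ∈ F then f j else 0, fun j hj => if_neg hj, ?_, ?_, i, hi, by simpa [hi]⟩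
  · simpa [Prod.snd_sum, sum_ite_mem] using congrArg Prod.snd hf
  · simpa [Prod.fst_sum, ite_smul, sum_ite_mem] using congrArg Prod.fst hf

variable [LinearOrder 𝕜] [IsStrictOrderedRing 𝕜]

lemma exists_add_mul_mem_Icc_boundary {F : Finset ι} {w μ : ι → 𝕜}
    (hw : ∀ i ∈ F, w i ∈ Set.Ioo 0 1) (hμ : ∃ i ∈ F, μ i ≠ 0) :
    ∃ t : 𝕜, (∀ i ∈ F, w i + t * μ i ∈ Set.Icc 0 1) ∧
      ∃ i ∈ F, w i + t * μ i = 0 ∨ w i + t * μ i = 1 := by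
  classical
  let exit i := if 0 < μ i then (1 - w i) / μ i else -w i / μ i
  have hmoving : ({i ∈ F | μ i ≠ 0}).Nonempty :=
    let ⟨i, hi, hμi⟩ := hμ; ⟨i, mem_filter.2 ⟨hi, hμi⟩⟩
  obtain ⟨j, hj, hjmin⟩ := exists_min_image _ exit hmoving
  rw [mem_filter] at hj
  have exit_pos : 0 < exit j := by
    obtain ⟨hw0, hw1⟩ := hw j hj.1
    rcases hj.2.lt_or_gt with hneg | hpos
    · simpa [exit, hneg.not_gt] using div_pos_of_neg_of_neg (neg_neg_of_pos hw0) hneg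
    · simpa [exit, hpos] using div_pos (sub_pos.2 hw1) hpos
  refine ⟨exit j, fun i hi => ?_, j, hj.1, ?_⟩
  · obtain ⟨hw0, hw1⟩ := hw i hi
    rcases lt_trichotomy (μ i) 0 with hneg | hzero | hpos
    · have h := hjmin i (mem_filter.2 ⟨hi, hneg.ne⟩)
      simp only [exit, hneg.not_gt, if_false] at h
      rw [le_div_iff_of_neg hneg] at h
      constructor <;> nlinarith
    · simp [hzero, hw0.le, hw1.le]
    · have h := hjmin i (mem_filter.2 ⟨hi, hpos.ne'⟩)
      simp only [exit, hpos, if_true] at h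
      rw [le_div_iff₀ hpos] at h
      constructor <;> nlinarith
  · rcases hj.2.lt_or_gt with hneg | hpos
    · left
      simp only [exit, hneg.not_gt, if_false]
      field_simp [hj.2]
      ring
    · right
      simp only [exit, hpos, if_true]
      field_simp
      ring

structure IsBalancedWeight (v : ι → E) (A : Finset ι) (c : 𝕜) (w : ι → 𝕜) : Prop where
  mem_Icc : ∀ i, w i ∈ Set.Icc 0 1
  sum_eq : ∑ i ∈ A, w i = c
  sum_smul_eq_zero : ∑ i ∈ A, w i • v i = 0

def fractionalIndices (A : Finset ι) (w : ι → 𝕜) : Finset ι := {i ∈ A | w i ∈ Set.Ioo 0 1}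

lemma exists_eq_zero_of_sum_eq_card_sub {A : Finset ι} {w : ι → 𝕜} {k : ℕ}
    (hw : ∀ i, w i ∈ Set.Icc 0 1) (hsum : ∑ i ∈ A, w i = #A - k) (hk : 0 < k)
    (hfrac : #(fractionalIndices A w) ≤ k) : ∃ i ∈ A, w i = 0 := by
  classical
  by_contra! hne
  set F := fractionalIndices A w
  have hFA : F ⊆ A := filter_subset _ _
  have hone : ∀ i ∈ A \ F, w i = 1 := fun i hi => by
    obtain ⟨hiA, hiF⟩ := mem_sdiff.1 hi
    have hpos := (hne i hiA).symm.lt_of_le (hw i).1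
    exact le_antisymm (hw i).2 (not_lt.1 fun h => hiF (mem_filter.2 ⟨hiA, hpos, h⟩))
  have hsplit : ∑ i ∈ A, w i = (#A - #F) + ∑ i ∈ F, w i := by
    rw [← sum_sdiff hFA, sum_congr rfl hone, sum_const, nsmul_one, card_sdiff_of_subset hFA,
      Nat.cast_sub (card_le_card hFA)]
  have hFk : (#F : 𝕜) ≤ k := by exact_mod_cast hfrac
  have hk' : (0 : 𝕜) < k := by exact_mod_cast hk
  rw [hsum] at hsplit
  rcases F.eq_empty_or_nonempty with hF | hF
  · simp only [hF, card_empty, Nat.cast_zero, sum_empty] at hsplit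
    linarith
  · linarith [sum_pos (fun i hi => (mem_filter.1 hi).2.1) hF]

variable {v : ι → E} {A : Finset ι} {c : 𝕜} {w : ι → 𝕜}

lemma IsBalancedWeight.smul (hw : IsBalancedWeight v A c w) {s : 𝕜} (hs : s ∈ Set.Icc 0 1) :
    IsBalancedWeight v A (s * c) (s • w) where
  mem_Icc i :=
    ⟨mul_nonneg hs.1 (hw.mem_Icc i).1, mul_le_one₀ hs.2 (hw.mem_Icc i).1 (hw.mem_Icc i).2⟩
  sum_eq := by simp only [Pi.smul_apply, smul_eq_mul, ← mul_sum, hw.sum_eq]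
  sum_smul_eq_zero := by
    simp only [Pi.smul_apply, smul_eq_mul, mul_smul, ← smul_sum, hw.sum_smul_eq_zero, smul_zero]

lemma IsBalancedWeight.exists_card_fractionalIndices_lt [FiniteDimensional 𝕜 E]
    (hw : IsBalancedWeight v A c w) (hF : finrank 𝕜 E + 1 < #(fractionalIndices A w)) :
    ∃ w', IsBalancedWeight v A c w' ∧ #(fractionalIndices A w') < #(fractionalIndices A w) := by
  classical
  set F := fractionalIndices A w
  have hFA : F ⊆ A := filter_subset _ _
  obtain ⟨μ, hμF, hμsum, hμsmul, hμ⟩ := exists_affine_relation v hF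
  obtain ⟨t, ht, j, hjF, hj⟩ :=
    exists_add_mul_mem_Icc_boundary (fun i hi => (mem_filter.1 hi).2) hμ
  have hμA : ∑ i ∈ A, μ i = 0 := (sum_subset hFA fun i _ hi => hμF i hi).symm.trans hμsum
  have hμvA : ∑ i ∈ A, μ i • v i = 0 :=
    (sum_subset hFA fun i _ hi => by rw [hμF i hi, zero_smul]).symm.trans hμsmul
  refine ⟨w + t • μ, ⟨fun i => ?_, ?_, ?_⟩, ?_⟩
  · by_cases hi : i ∈ F
    · exact ht i hi
    · simpa [hμF i hi] using hw.mem_Icc i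
  · simp only [Pi.add_apply, Pi.smul_apply, smul_eq_mul, sum_add_distrib, ← mul_sum,
      hw.sum_eq, hμA, mul_zero, add_zero]
  · simp only [Pi.add_apply, Pi.smul_apply, smul_eq_mul, add_smul, mul_smul, sum_add_distrib,
      ← smul_sum, hw.sum_smul_eq_zero, hμvA, smul_zero, add_zero]
  · refine (card_le_card fun i hi => ?_).trans_lt (card_erase_lt_of_mem hjF)
    obtain ⟨hiA, hi0, hi1⟩ := mem_filter.1 hi
    have hiF : i ∈ F := by
      by_contra hiF
      simp only [Pi.add_apply, Pi.smul_apply, hμF i hiF, smul_zero, add_zero] at hi0 hi1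
      exact hiF (mem_filter.2 ⟨hiA, hi0, hi1⟩)
    refine mem_erase.2 ⟨?_, hiF⟩
    rintro rfl
    simp only [Pi.add_apply, Pi.smul_apply, smul_eq_mul] at hi0 hi1
    rcases hj with h | h <;> simp [h] at hi0 hi1

lemma IsBalancedWeight.exists_card_fractionalIndices_le [FiniteDimensional 𝕜 E]
    (hw : IsBalancedWeight v A c w) :
    ∃ w', IsBalancedWeight v A c w' ∧ #(fractionalIndices A w') ≤ finrank 𝕜 E + 1 := by
  induction h : #(fractionalIndices A w) using Nat.strong_induction_on generalizing w with
  | _ k ih =>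
    by_cases hk : finrank 𝕜 E + 1 < k
    · obtain ⟨w', hw', hlt⟩ := hw.exists_card_fractionalIndices_lt (h ▸ hk)
      exact ih _ (h ▸ hlt) hw' rfl
    · exact ⟨w, hw, by omega⟩

lemma IsBalancedWeight.exists_erase [FiniteDimensional 𝕜 E] [DecidableEq ι]
    (hw : IsBalancedWeight v A (#A - finrank 𝕜 E : 𝕜) w) (hA : finrank 𝕜 E < #A) :
    ∃ i ∈ A, ∃ w', IsBalancedWeight v (A.erase i) (#(A.erase i) - finrank 𝕜 E : 𝕜) w' := by
  set d := finrank 𝕜 E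
  have hA' : (d : 𝕜) + 1 ≤ #A := by exact_mod_cast hA
  have hpos : (0 : 𝕜) < #A - d := by linarith
  have hs : ((#A - d - 1) / (#A - d) : 𝕜) ∈ Set.Icc 0 1 :=
    ⟨div_nonneg (by linarith) hpos.le, div_le_one_of_le₀ (by linarith) hpos.le⟩
  obtain ⟨w', hw', hfrac⟩ := (hw.smul hs).exists_card_fractionalIndices_le
  rw [div_mul_cancel₀ _ hpos.ne'] at hw'
  obtain ⟨i, hi, hwi⟩ := exists_eq_zero_of_sum_eq_card_sub hw'.mem_Icc (k := d + 1)
    (by push_cast; rw [hw'.sum_eq]; ring) d.succ_pos hfrac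
  have hcard : (#(A.erase i) : 𝕜) + 1 = #A := by exact_mod_cast card_erase_add_one hi
  refine ⟨i, hi, w', hw'.mem_Icc, ?_, ?_⟩
  · rw [sum_erase _ hwi, hw'.sum_eq]; linarith
  · rw [sum_erase _ (by rw [hwi, zero_smul]), hw'.sum_smul_eq_zero]

variable (𝕜) in
/-- The sets that occur as prefixes of the Steinitz ordering. -/
def IsSteinitzSet (v : ι → E) (A : Finset ι) : Prop :=
  #A ≤ finrank 𝕜 E ∨ ∃ w, IsBalancedWeight v A (#A - finrank 𝕜 E : 𝕜) w

lemma isSteinitzSet_of_sum_eq_zero (hA : ∑ i ∈ A, v i = 0) : IsSteinitzSet 𝕜 v A := by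
  refine or_iff_not_imp_left.2 fun hd => ?_
  have hd' : (finrank 𝕜 E : 𝕜) < #A := by exact_mod_cast not_le.1 hd
  have hpos : (0 : 𝕜) < #A := (Nat.cast_nonneg _).trans_lt hd'
  refine ⟨fun _ => (#A - finrank 𝕜 E) / #A, fun _ => ⟨?_, ?_⟩, ?_, ?_⟩
  · exact div_nonneg (sub_nonneg.2 hd'.le) hpos.le
  · exact div_le_one_of_le₀ (sub_le_self _ (Nat.cast_nonneg _)) hpos.le
  · rw [sum_const, nsmul_eq_mul, mul_div_cancel₀ _ hpos.ne']
  · rw [← smul_sum, hA, smul_zero]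

lemma IsSteinitzSet.exists_erase [FiniteDimensional 𝕜 E] [DecidableEq ι]
    (hA : IsSteinitzSet 𝕜 v A) (hne : A.Nonempty) : ∃ i ∈ A, IsSteinitzSet 𝕜 v (A.erase i) := by
  obtain ⟨i, hi⟩ := hne
  by_cases hd : #A ≤ finrank 𝕜 E
  · exact ⟨i, hi, Or.inl (card_erase_le.trans hd)⟩
  · obtain ⟨w, hw⟩ := hA.resolve_left hd
    obtain ⟨j, hj, w', hw'⟩ := hw.exists_erase (not_le.1 hd)
    exact ⟨j, hj, Or.inr ⟨w', hw'⟩⟩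

end LinearOrderedField

variable {E ι : Type*} [NormedAddCommGroup E] [NormedSpace ℝ E] {v : ι → E} {A : Finset ι}
  {r : ℝ}

lemma IsSteinitzSet.norm_sum_le (hA : IsSteinitzSet ℝ v A) (hv : ∀ i ∈ A, ‖v i‖ ≤ r)
    (hr : 0 ≤ r) : ‖∑ i ∈ A, v i‖ ≤ finrank ℝ E * r := by
  rcases hA with hA | ⟨w, hw⟩
  · calc ‖∑ i ∈ A, v i‖ ≤ ∑ i ∈ A, ‖v i‖ := _root_.norm_sum_le _ _
      _ ≤ #A * r := by simpa using sum_le_sum hv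
      _ ≤ finrank ℝ E * r := by gcongr
  · have h1w : ∀ i, 0 ≤ 1 - w i := fun i => sub_nonneg.2 (hw.mem_Icc i).2
    have hrepr : ∑ i ∈ A, v i = ∑ i ∈ A, (1 - w i) • v i := by
      simp only [sub_smul, one_smul, sum_sub_distrib, hw.sum_smul_eq_zero, sub_zero]
    calc ‖∑ i ∈ A, v i‖ ≤ ∑ i ∈ A, ‖(1 - w i) • v i‖ := hrepr ▸ _root_.norm_sum_le _ _
      _ ≤ ∑ i ∈ A, (1 - w i) * r := sum_le_sum fun i hi => by
          rw [norm_smul, Real.norm_of_nonneg (h1w i)]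
          exact mul_le_mul_of_nonneg_left (hv i hi) (h1w i)
      _ = finrank ℝ E * r := by simp [← sum_mul, sum_sub_distrib, hw.sum_eq]

theorem exists_chain_norm_sum_le [FiniteDimensional ℝ E] [DecidableEq ι]
    (hA : ∑ i ∈ A, v i = 0) (hv : ∀ i ∈ A, ‖v i‖ ≤ r) (hr : 0 ≤ r) :
    ∃ 𝒞 : Finset (Finset ι), IsChain (· ⊆ ·) (𝒞 : Set (Finset ι)) ∧ #𝒞 = #A + 1 ∧
      ∀ B ∈ 𝒞, B ⊆ A ∧ ‖∑ i ∈ B, v i‖ ≤ finrank ℝ E * r := by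
  obtain ⟨𝒞, hchain, hcard, h𝒞⟩ := exists_chain_of_exists_erase
    (fun _ hB hne => hB.exists_erase hne) (isSteinitzSet_of_sum_eq_zero (𝕜 := ℝ) hA)
  refine ⟨𝒞, hchain, hcard, fun B hB => ⟨(h𝒞 B hB).1, ?_⟩⟩
  exact (h𝒞 B hB).2.norm_sum_le (fun i hi => hv i ((h𝒞 B hB).1 hi)) hr

end Steinitz

section ZeroSum

variable {ι : Type*} [DecidableEq ι] {d r m : ℕ} {x : ι → Fin d → ℤ}

lemma exists_chain_abs_sum_toLeft_sub_le {A : Finset ι} (hx : ∀ i ∈ A, ∀ t, |x i t| ≤ r)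
    (hA : ∀ t, |∑ i ∈ A, x i t| ≤ m * r) :
    ∃ 𝒞 : Finset (Finset (ι ⊕ Fin m)), IsChain (· ⊆ ·) (𝒞 : Set (Finset (ι ⊕ Fin m))) ∧
      #𝒞 = #A + m + 1 ∧ ∀ B ∈ 𝒞, B.toLeft ⊆ A ∧
        ∀ t, |∑ i ∈ B.toLeft, (x i t : ℝ) - #B.toRight * (∑ i ∈ A, x i t) / m| ≤ d * r := by
  set z : Fin d → ℤ := fun t => ∑ i ∈ A, x i t
  let v : ι ⊕ Fin m → Fin d → ℝ := Sum.elim (fun i t => x i t) (fun _ t => -(z t) / m)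
  have hv_sum : ∑ i ∈ A.disjSum univ, v i = 0 := by
    ext t
    have hzt : ∑ i ∈ A, (x i t : ℝ) = z t := by push_cast [z]; rfl
    rw [Finset.sum_apply, sum_disjSum]
    simp only [v, Sum.elim_inl, Sum.elim_inr, sum_const, card_univ, Fintype.card_fin,
      nsmul_eq_mul, Pi.zero_apply, hzt]
    rcases m.eq_zero_or_pos with rfl | hm
    · simpa using hA t
    · field_simp
      ring
  have hv_norm : ∀ i ∈ A.disjSum univ, ‖v i‖ ≤ r := by
    refine fun i hi => (pi_norm_le_iff_of_nonneg r.cast_nonneg).2 fun t => ?_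
    rw [Real.norm_eq_abs]
    rcases i with i | _
    · simp only [v, Sum.elim_inl]
      exact_mod_cast hx i (by simpa using hi) t
    · simp only [v, Sum.elim_inr, abs_div, abs_neg, Nat.abs_cast]
      exact div_le_of_le_mul₀ m.cast_nonneg r.cast_nonneg (by rw [mul_comm]; exact_mod_cast hA t)
  obtain ⟨𝒞, hchain, h𝒞card, h𝒞⟩ :=
    Steinitz.exists_chain_norm_sum_le hv_sum hv_norm r.cast_nonneg
  rw [card_disjSum, card_univ, Fintype.card_fin] at h𝒞card
  refine ⟨𝒞, hchain, h𝒞card, fun B hB => ⟨?_, fun t => ?_⟩⟩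
  · simpa using (subset_disjSum.1 (h𝒞 B hB).1).1
  · have hcoord : (∑ i ∈ B, v i) t = ∑ i ∈ B.toLeft, (x i t : ℝ) - #B.toRight * z t / m := by
      rw [Finset.sum_apply, sum_sum_eq_sum_toLeft_add_sum_toRight]
      simp only [v, Sum.elim_inl, Sum.elim_inr, sum_const, nsmul_eq_mul]
      ring
    calc _ = |(∑ i ∈ B, v i) t| := by rw [hcoord]
      _ ≤ ‖∑ i ∈ B, v i‖ := by rw [← Real.norm_eq_abs]; exact norm_le_pi_norm _ t
      _ ≤ d * r := by simpa [finrank_fin_fun] using (h𝒞 B hB).2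

theorem exists_subset_nonempty_sum_eq_zero {A : Finset ι} (hx : ∀ i ∈ A, ∀ t, |x i t| ≤ r)
    (hA : ∀ t, |∑ i ∈ A, x i t| ≤ m * r) (hcard : (m + 2) * (2 * r * d + 1) ^ d ≤ #A) :
    ∃ U ⊆ A, U.Nonempty ∧ ∑ i ∈ U, x i = 0 := by
  obtain ⟨𝒞, hchain, h𝒞card, h𝒞⟩ := exists_chain_abs_sum_toLeft_sub_le hx hA
  let key (B : Finset (ι ⊕ Fin m)) : ℕ × (Fin d → ℤ) :=
    (#B.toRight, fun t => ∑ i ∈ B.toLeft, x i t -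
      ⌈(#B.toRight * (∑ i ∈ A, x i t) / m : ℝ) - (d * r : ℕ)⌉)
  let T := range (m + 1) ×ˢ Fintype.piFinset fun _ : Fin d => Icc (0 : ℤ) (2 * (d * r : ℕ))
  have hkey : ∀ B ∈ 𝒞, key B ∈ T := fun B hB => by
    refine mem_product.2 ⟨mem_range.2 (Nat.lt_succ_of_le ?_), Fintype.mem_piFinset.2 fun t => ?_⟩
    · simpa using card_le_univ B.toRight
    · exact Int.sub_ceil_sub_mem_Icc (by exact_mod_cast (h𝒞 B hB).2 t)
  have hT : #T < #𝒞 := by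
    have hside : (2 * ((d * r : ℕ) : ℤ) + 1 - 0).toNat = 2 * r * d + 1 := by
      rw [show 2 * r * d = 2 * (d * r) by ring]; omega
    have hpow : 0 < (2 * r * d + 1) ^ d := by positivity
    simp only [T, card_product, card_range, Fintype.card_piFinset, prod_const, card_univ,
      Fintype.card_fin, Int.card_Icc, hside, h𝒞card]
    nlinarith
  obtain ⟨B, hB, B', hB', hss, hkeyeq⟩ := hchain.exists_ssubset_map_eq hkey hT
  simp only [key, Prod.mk.injEq] at hkeyeq
  obtain ⟨hright, hleft⟩ := hkeyeq
  refine ⟨B'.toLeft \ B.toLeft, sdiff_subset.trans (h𝒞 B' hB').1,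
    toLeft_sdiff_toLeft_nonempty hss hright, ?_⟩
  rw [sum_sdiff_eq_sub (toLeft_subset_toLeft hss.subset), sub_eq_zero]
  ext t
  have := congrFun hleft t
  rw [hright] at this
  simpa [Finset.sum_apply] using this.symm

theorem exists_subset_card_le_sum_eq (A : Finset ι) (hx : ∀ i ∈ A, ∀ t, |x i t| ≤ r)
    (hA : ∀ t, |∑ i ∈ A, x i t| ≤ m * r) :
    ∃ S ⊆ A, #S ≤ (m + 2) * (2 * r * d + 1) ^ d ∧ ∑ i ∈ S, x i = ∑ i ∈ A, x i := by
  induction A using Finset.strongInduction with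
  | H A ih =>
  by_cases hcard : #A ≤ (m + 2) * (2 * r * d + 1) ^ d
  · exact ⟨A, subset_rfl, hcard, rfl⟩
  obtain ⟨U, hUA, hU, hU0⟩ := exists_subset_nonempty_sum_eq_zero hx hA (not_le.1 hcard).le
  have hsum : ∑ i ∈ A \ U, x i = ∑ i ∈ A, x i := by rw [sum_sdiff_eq_sub hUA, hU0, sub_zero]
  obtain ⟨S, hSA, hS, hSsum⟩ := ih (A \ U) (sdiff_ssubset hUA hU)
    (fun i hi => hx i (sdiff_subset hi))
    (fun t => by simpa only [← Finset.sum_apply, hsum] using hA t)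
  exact ⟨S, hSA.trans sdiff_subset, hS, hSsum.trans hsum⟩

end ZeroSum

theorem stmt_2_general (r d q n : ℕ) (hr : 0 < r)
    (x : Fin n → Fin d → ℤ)
    (hx : ∀ i j, |x i j| ≤ (r : ℤ))
    (hw : ∀ j, |∑ i, x i j| ≤ (q : ℤ)) :
    ∃ S : Finset (Fin n),
      S.card ≤ (⌈(q : ℚ) / r⌉₊ + 2) * (2 * r * d + 1) ^ d ∧
      ∑ i ∈ S, x i = ∑ i, x i := by
  have hq : (q : ℤ) ≤ ⌈(q : ℚ) / r⌉₊ * r := by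
    have := Nat.le_ceil ((q : ℚ) / r)
    rw [div_le_iff₀ (by exact_mod_cast hr)] at this
    exact_mod_cast this
  obtain ⟨S, -, hS, hSsum⟩ :=
    exists_subset_card_le_sum_eq univ (fun i _ => hx i) fun j => (hw j).trans hq
  exact ⟨S, hS, hSsum⟩

theorem stmt_2 (r d q n : ℕ) (hr : 0 < r) (hd : 0 < d) (hq : 0 < q)
    (hn : (⌈(q : ℚ) / r⌉₊ + 2) * (2 * r * d + 1) ^ d ≤ n)
    (x : Fin n → Fin d → ℤ)
    (hx : ∀ i j, |x i j| ≤ (r : ℤ))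
    (hw : ∀ j, |∑ i, x i j| ≤ (q : ℤ)) :
    ∃ S : Finset (Fin n),
      S.card ≤ (⌈(q : ℚ) / r⌉₊ + 2) * (2 * r * d + 1) ^ d ∧
      ∑ i ∈ S, x i = ∑ i, x i :=
  stmt_2_general r d q n hr x hx hw
end

section
/- For every positive integer n there exists a graph D on n vertices such that for every induced subgraph H of D and every integer t, the number of vertices of H having degree t in H is at most 3n/ln(n). (For n large enough, e.g. n ≥ 2.) -/
/-!
Take for `D` a cluster graph (a disjoint union of cliques) with `M = ⌊3n / log n⌋` clique labels,
clique `b` having at most `M / (b + 1)` vertices. These capacities add up to about `M log M ≥ n`,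
so all `n` vertices fit. In an induced subgraph, the vertices of degree `t` are those lying in
cliques that meet it in exactly `t + 1` vertices; such a clique `b` has `(b + 1)(t + 1) ≤ M`, so
there are at most `M / (t + 1)` of them and at most `M` vertices of degree `t`.
-/

open Finset Real

namespace SimpleGraph

variable {V ι : Type*}

def clusterGraph (f : V → ι) : SimpleGraph V where
  Adj u v := u ≠ v ∧ f u = f v

@[simp]
lemma clusterGraph_adj {f : V → ι} {u v : V} : (clusterGraph f).Adj u v ↔ u ≠ v ∧ f u = f v :=
  Iff.rfl

lemma card_filter_clusterGraph_adj [DecidableEq V] [DecidableEq ι] (f : V → ι) {v : V}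
    [DecidablePred ((clusterGraph f).Adj v)] {s : Finset V} (hv : v ∈ s) :
    #{u ∈ s | (clusterGraph f).Adj v u} = #{u ∈ s | f u = f v} - 1 := by
  have : {u ∈ s | (clusterGraph f).Adj v u} = {u ∈ s | f u = f v}.erase v := by
    ext u
    simp only [mem_filter, clusterGraph_adj, mem_erase]
    grind
  rw [this, card_erase_of_mem (by simp [hv])]

end SimpleGraph

lemma card_filter_card_fiber_eq_le {V : Type*} {f : V → ℕ} {s : Finset V} {M k : ℕ} (hk : 0 < k)
    (hf : ∀ v ∈ s, #{u ∈ s | f u = f v} ≤ M / (f v + 1)) :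
    #{v ∈ s | #{u ∈ s | f u = f v} = k} ≤ M := by
  set S := {v ∈ s | #{u ∈ s | f u = f v} = k}
  have hfiber : ∀ b ∈ S.image f, #{v ∈ S | f v = b} = k := by
    simp only [mem_image]
    rintro _ ⟨w, hw, rfl⟩
    obtain ⟨hws, hwk⟩ := mem_filter.1 hw
    have : {v ∈ S | f v = f w} = {u ∈ s | f u = f w} := by
      ext u
      simp only [S, mem_filter, and_assoc]
      constructor
      · rintro ⟨hu, -, hfu⟩
        exact ⟨hu, hfu⟩
      · rintro ⟨hu, hfu⟩
        exact ⟨hu, hfu ▸ hwk, hfu⟩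
    rw [this, hwk]
  have hrange : S.image f ⊆ range (M / k) := by
    simp only [subset_iff, mem_image, mem_range]
    rintro _ ⟨w, hw, rfl⟩
    obtain ⟨hws, hwk⟩ := mem_filter.1 hw
    have hcap := hf w hws
    rw [hwk, Nat.le_div_iff_mul_le (Nat.succ_pos _)] at hcap
    exact Nat.lt_of_succ_le ((Nat.le_div_iff_mul_le hk).2 (by rwa [mul_comm]))
  calc #S = ∑ b ∈ S.image f, #{v ∈ S | f v = b} :=
        card_eq_sum_card_fiberwise fun v hv => mem_image_of_mem f hv
    _ = #(S.image f) * k := by rw [sum_congr rfl hfiber, sum_const, smul_eq_mul]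
    _ ≤ M / k * k := Nat.mul_le_mul_right k ((card_le_card hrange).trans (card_range _).le)
    _ ≤ M := Nat.div_mul_le_self M k

lemma Fintype.exists_card_fiber_le {V ι : Type*} [Fintype V] [Fintype ι] [DecidableEq ι]
    (c : ι → ℕ) (h : Fintype.card V ≤ ∑ i, c i) :
    ∃ f : V → ι, ∀ i, #{v | f v = i} ≤ c i := by
  obtain ⟨e⟩ : Nonempty (V ↪ Σ i, Fin (c i)) :=
    Function.Embedding.nonempty_of_card_le (by simpa using h)
  refine ⟨fun v => (e v).1, fun i => ?_⟩
  calc #{v | (e v).1 = i} ≤ #{p : Σ i, Fin (c i) | p.1 = i} :=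
        card_le_card_of_injOn e (fun v hv => by simpa using hv) e.injective.injOn
    _ = #(univ.map (Function.Embedding.sigmaMk i)) := by
        congr 1
        ext ⟨j, x⟩
        simp only [mem_filter, mem_univ, true_and, mem_map, Function.Embedding.sigmaMk_apply]
        constructor
        · rintro rfl
          exact ⟨x, rfl⟩
        · rintro ⟨y, hy⟩
          exact (congrArg Sigma.fst hy).symm
    _ = c i := by simp only [card_map, card_univ, Fintype.card_fin]

lemma mul_log_sub_one_le_sum_div (M : ℕ) :
    (M : ℝ) * (log M - 1) ≤ ∑ i ∈ range M, ((M / (i + 1) : ℕ) : ℝ) := by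
  have hterm : ∀ i ∈ range M, (M : ℝ) / (i + 1) - 1 ≤ ((M / (i + 1) : ℕ) : ℝ) := fun i _ => by
    rw [← Nat.floor_div_eq_div (K := ℝ)]
    push_cast
    exact (Nat.sub_one_lt_floor _).le
  have hharmonic : log M ≤ ∑ i ∈ range M, (1 : ℝ) / (i + 1) := by
    calc log M ≤ log ↑(M + 1) := by
          rcases M.eq_zero_or_pos with rfl | hM
          · simp
          · exact log_le_log (by positivity) (by push_cast; linarith)
      _ ≤ harmonic M := log_add_one_le_harmonic M
      _ = ∑ i ∈ range M, (1 : ℝ) / (i + 1) := by simp [harmonic]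
  calc (M : ℝ) * (log M - 1) ≤ ∑ i ∈ range M, ((M : ℝ) / (i + 1) - 1) := by
        rw [sum_sub_distrib, sum_const, card_range, nsmul_one, mul_sub, mul_one]
        simp only [div_eq_mul_one_div (M : ℝ), ← mul_sum]
        gcongr
    _ ≤ _ := sum_le_sum hterm

lemma two_mul_log_le_self {x : ℝ} (hx : 0 < x) : 2 * log x ≤ x := by
  have h := log_le_sub_one_of_pos (div_pos hx (exp_pos 1))
  rw [log_div hx.ne' (exp_pos 1).ne', log_exp] at h
  have he := exp_one_gt_two
  rcases le_or_gt (log x) 0 with hl | hl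
  · linarith
  · have : x / exp 1 ≤ x / 2 := div_le_div_of_nonneg_left hx.le two_pos he.le
    linarith

lemma le_mul_log_sub_one {x M : ℝ} (hx : 1 < x) (hM : 5 / 2 * (x / log x) ≤ M) :
    x ≤ M * (log M - 1) := by
  have hL : 0 < log x := log_pos hx
  have hlogM : log (5 / 2) + log x - log (log x) ≤ log M := by
    have := log_le_log (by positivity) hM
    rw [log_mul (by norm_num) (by positivity), log_div (by positivity) hL.ne'] at this
    linarith
  have hlogL : log (log x) ≤ 3 / 5 * log x - 1 - log (3 / 5) := by
    have := log_le_sub_one_of_pos (show 0 < 3 / 5 * log x by positivity)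
    rw [log_mul (by norm_num) hL.ne'] at this
    linarith
  have hconst : 0 ≤ log (5 / 2) + log (3 / 5) := by
    rw [← log_mul (by norm_num) (by norm_num)]
    exact log_nonneg (by norm_num)
  calc x = 5 / 2 * (x / log x) * (2 / 5 * log x) := by field_simp
    _ ≤ M * (log M - 1) := by
        have : 0 ≤ M := le_trans (by positivity) hM
        gcongr
        linarith

lemma le_sum_div_floor_div_log {n : ℕ} (hn : 2 ≤ n) :
    n ≤ ∑ i ∈ range ⌊3 * (n : ℝ) / log n⌋₊, ⌊3 * (n : ℝ) / log n⌋₊ / (i + 1) := by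
  set M := ⌊3 * (n : ℝ) / log n⌋₊
  have hx : (1 : ℝ) < n := by exact_mod_cast hn
  have hL : 0 < log n := log_pos hx
  have htwo : 2 ≤ (n : ℝ) / log n := by
    rw [le_div_iff₀ hL]
    linarith [two_mul_log_le_self (x := n) (by positivity)]
  -- `3y - 1 ≥ 5y / 2` for `y = n / log n ≥ 2`
  have hM : 5 / 2 * ((n : ℝ) / log n) ≤ M := by
    have h3 : 3 * (n : ℝ) / log n = 3 * ((n : ℝ) / log n) := mul_div_assoc _ _ _
    linarith [Nat.sub_one_lt_floor (3 * (n : ℝ) / log n)]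
  exact_mod_cast (le_mul_log_sub_one hx hM).trans (mul_log_sub_one_le_sum_div M)

open scoped Classical in
theorem stmt_6 (n : ℕ) (hn : 2 ≤ n) :
    ∃ D : SimpleGraph (Fin n), ∀ (s : Finset (Fin n)) (t : ℕ),
      ((s.filter (fun v => (s.filter (fun u => D.Adj v u)).card = t)).card : ℝ) ≤
        3 * n / Real.log n := by
  set M := ⌊3 * (n : ℝ) / log n⌋₊
  obtain ⟨g, hg⟩ := Fintype.exists_card_fiber_le (V := Fin n) (fun i : Fin M => M / (i + 1))
    (by simpa [Fin.sum_univ_eq_sum_range (fun i => M / (i + 1))] using le_sum_div_floor_div_log hn)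
  let f : Fin n → ℕ := fun v => g v
  refine ⟨SimpleGraph.clusterGraph f, fun s t => ?_⟩
  have hf : ∀ v ∈ s, #{u ∈ s | f u = f v} ≤ M / (f v + 1) := fun v _ =>
    calc #{u ∈ s | f u = f v} ≤ #{u | g u = g v} := by
          simpa [f, Fin.val_inj] using card_le_card (filter_subset_filter _ (subset_univ s))
      _ ≤ M / (f v + 1) := hg (g v)
  calc ((#{v ∈ s | #{u ∈ s | (SimpleGraph.clusterGraph f).Adj v u} = t} : ℕ) : ℝ)
      = #{v ∈ s | #{u ∈ s | f u = f v} = t + 1} := by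
        congr 2
        refine filter_congr fun v hv => ?_
        have hdeg := SimpleGraph.card_filter_clusterGraph_adj f hv
        have hpos : 0 < #{u ∈ s | f u = f v} := card_pos.2 ⟨v, by simp [hv]⟩
        omega
    _ ≤ M := by exact_mod_cast card_filter_card_fiber_eq_le t.succ_pos hf
    _ ≤ 3 * n / log n := Nat.floor_le (by positivity)
end

section
/- Let G be a graph and x, y, z vertices with deg(x) < deg(y) = deg(z), such that (x,y) ∈ E iff (x,z) ∈ E, and if (y,z) ∈ E then {x,y,z} induces a triangle. Then one can delete at most 2 vertices (none of them x, y, or z) so that in the resulting graph deg(y) and deg(z) each decrease by exactly 1 while deg(x) is unchanged. -/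
/-!
Since deg x < deg y, the vertex y has a neighbour other than x that is not adjacent to x, and
likewise for z. If some such vertex is adjacent to both y and z, deleting it suffices. Otherwise
pick one private neighbour a of y and one b of z: then a ≁ z and b ≁ y, so deleting {a, b} lowers
each of deg y, deg z by one. Neither a nor b is y or z: if a = z then y ~ z, hence x ~ z = a by the
triangle hypothesis.
-/

open Finset

namespace SimpleGraph

variable {V : Type*} (G : SimpleGraph V)

theorem exists_adj_not_adj_of_degree_lt [DecidableEq V] {x y : V}
    [Fintype (G.neighborSet x)] [Fintype (G.neighborSet y)] (h : G.degree x < G.degree y) :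
    ∃ a, G.Adj y a ∧ ¬G.Adj x a ∧ a ≠ x := by
  -- Removing the edge xy (if present) from both neighbourhoods keeps the strict inequality.
  have hcard : ((G.neighborFinset x).erase y).card < ((G.neighborFinset y).erase x).card := by
    by_cases hxy : G.Adj x y
    · have hx := card_erase_add_one ((G.mem_neighborFinset x y).2 hxy)
      have hy := card_erase_add_one ((G.mem_neighborFinset y x).2 hxy.symm)
      rw [card_neighborFinset_eq_degree] at hx hy
      omega
    · rwa [erase_eq_of_notMem (fun h => hxy ((G.mem_neighborFinset x y).1 h)),
        erase_eq_of_notMem (fun h => hxy ((G.mem_neighborFinset y x).1 h).symm),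
        card_neighborFinset_eq_degree, card_neighborFinset_eq_degree]
  obtain ⟨a, hya, hxa⟩ := exists_mem_notMem_of_card_lt_card hcard
  rw [mem_erase, mem_neighborFinset] at hya
  exact ⟨a, hya.2, fun hxa' => hxa (mem_erase.2 ⟨hya.2.ne', (G.mem_neighborFinset x a).2 hxa'⟩),
    hya.1⟩

theorem card_compl_filter_adj [Fintype V] [DecidableEq V] [DecidableRel G.Adj] (X : Finset V)
    (v : V) : (Xᶜ.filter (G.Adj v ·)).card = G.degree v - (X.filter (G.Adj v ·)).card := by
  have hsplit : Xᶜ.filter (G.Adj v ·) = G.neighborFinset v \ X.filter (G.Adj v ·) := by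
    ext u
    simp only [mem_filter, mem_compl, mem_sdiff, mem_neighborFinset]
    tauto
  rw [hsplit, card_sdiff_of_subset (fun u hu => by simpa using (mem_filter.1 hu).2),
    card_neighborFinset_eq_degree]

end SimpleGraph

open SimpleGraph

theorem stmt_12_general {V : Type*} [Fintype V] [DecidableEq V]
    (G : SimpleGraph V) [DecidableRel G.Adj]
    (x y z : V)
    (hdeg : G.degree x < G.degree y) (hdeg' : G.degree y = G.degree z)
    (htri : G.Adj y z → G.Adj x y ∧ G.Adj x z) :
    ∃ X : Finset V, X.card ≤ 2 ∧ x ∉ X ∧ y ∉ X ∧ z ∉ X ∧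
      (Xᶜ.filter (fun u => G.Adj y u)).card = G.degree y - 1 ∧
      (Xᶜ.filter (fun u => G.Adj z u)).card = G.degree z - 1 ∧
      (Xᶜ.filter (fun u => G.Adj x u)).card = G.degree x := by
  simp only [G.card_compl_filter_adj]
  by_cases hcommon : ∃ w, G.Adj y w ∧ G.Adj z w ∧ ¬G.Adj x w ∧ w ≠ x
  · obtain ⟨w, hyw, hzw, hxw, hwx⟩ := hcommon
    refine ⟨{w}, by simp, by simp [hwx.symm], by simp [hyw.ne], by simp [hzw.ne], ?_⟩
    simp [filter_singleton, hyw, hzw, hxw]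
  · push Not at hcommon
    obtain ⟨a, hya, hxa, hax⟩ := G.exists_adj_not_adj_of_degree_lt hdeg
    obtain ⟨b, hzb, hxb, hbx⟩ := G.exists_adj_not_adj_of_degree_lt (hdeg' ▸ hdeg)
    have hza : ¬G.Adj z a := fun hza => hax (hcommon a hya hza hxa)
    have hyb : ¬G.Adj y b := fun hyb => hbx (hcommon b hyb hzb hxb)
    have haz : a ≠ z := by
      rintro rfl
      exact hxa (htri hya).2
    have hby : b ≠ y := by
      rintro rfl
      exact hxb (htri hzb.symm).1
    refine ⟨{a, b}, card_le_two, by simp [hax.symm, hbx.symm], by simp [hya.ne, hby.symm],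
      by simp [haz.symm, hzb.ne], ?_⟩
    simp [filter_insert, filter_singleton, hya, hyb, hza, hzb, hxa, hxb]

theorem stmt_12 {V : Type*} [Fintype V] [DecidableEq V]
    (G : SimpleGraph V) [DecidableRel G.Adj]
    (x y z : V) (hxy : x ≠ y) (hxz : x ≠ z) (hyz : y ≠ z)
    (hdeg : G.degree x < G.degree y) (hdeg' : G.degree y = G.degree z)
    (hiff : G.Adj x y ↔ G.Adj x z)
    (htri : G.Adj y z → G.Adj x y ∧ G.Adj x z) :
    ∃ X : Finset V, X.card ≤ 2 ∧ x ∉ X ∧ y ∉ X ∧ z ∉ X ∧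
      (Xᶜ.filter (fun u => G.Adj y u)).card = G.degree y - 1 ∧
      (Xᶜ.filter (fun u => G.Adj z u)).card = G.degree z - 1 ∧
      (Xᶜ.filter (fun u => G.Adj x u)).card = G.degree x :=
  stmt_12_general G x y z hdeg hdeg' htri
end

section
/- For all positive integers k and r, there exists a constant C = C(k,r) such that every complete graph on n vertices with edge weights in {0,...,r} contains an induced complete subgraph on at least n − C vertices in which at least min{k, n−C} vertices have the same weighted degree. -/
/-!
Sort the vertices by degree into buckets of width `B = (2K + 1)(r + 1)`. Once `n > 2K` some bucket
holds `K` vertices, and by Ramsey's theorem for `r + 1` colours `k` of them, `U`, span edges of a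
single weight. Inside `U` all degrees then agree, while the degrees in the whole graph of any two
`u, v ∈ U` differ by at most `B`. Hence the vectors `(w u x - w v x)_{u, v ∈ U}`, `x ∉ U`, have
entries in `[-r, r]` and a total with entries in `[-B, B]`. Such a family contains a zero-sum
subfamily whose complement has size bounded in terms of `k`, `r` and `B` only; deleting that
complement equalises the degrees of the vertices of `U`.

The zero-sum statement is proved by induction on the dimension: greedily pack the family into
disjoint blocks of at most `2r + 1` vectors whose first coordinates sum to zero. The leftover
vectors have few positive or few negative first coordinates, so, their total being bounded, there
are few of them; the block sums then form a large family of lower dimension, again with bounded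
entries and bounded total.
-/

open Finset

section ZeroSum

variable {ι : Type*}

theorem abs_sum_le_card_mul (s : Finset ι) (f : ι → ℤ) {r : ℤ} (hf : ∀ x ∈ s, |f x| ≤ r) :
    |∑ x ∈ s, f x| ≤ #s * r :=
  (abs_sum_le_sum_abs f s).trans (by simpa using sum_le_card_nsmul s _ r hf)

theorem card_le_mul_sub_sum (g : ι → ℤ) (A : Finset ι) (r m : ℕ) (h0 : ∀ x ∈ A, g x ≠ 0)
    (hb : ∀ x ∈ A, g x ≤ r) (hm : #{x ∈ A | 0 < g x} ≤ m) :
    (#A : ℤ) ≤ m * (r + 1) - ∑ x ∈ A, g x := by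
  have hpos : ∑ x ∈ A with 0 < g x, g x ≤ #{x ∈ A | 0 < g x} * r := by
    simpa using sum_le_card_nsmul _ g r fun x hx => hb x (mem_filter.1 hx).1
  have hneg : ∑ x ∈ A with ¬0 < g x, g x ≤ -#{x ∈ A | ¬0 < g x} := by
    simpa using sum_le_card_nsmul _ g (-1) fun x hx => by
      have := h0 x (mem_filter.1 hx).1
      have := (mem_filter.1 hx).2
      omega
  have hm' : (#{x ∈ A | 0 < g x} : ℤ) * r ≤ m * r := by gcongr
  have hcard := card_filter_add_card_filter_not (s := A) (fun x => 0 < g x)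
  rw [← sum_filter_add_sum_filter_not A (fun x => 0 < g x), ← hcard]
  push_cast
  linarith

variable [DecidableEq ι]

theorem abs_sum_le_abs_sum_add_card_sdiff_mul {s t : Finset ι} (f : ι → ℤ) {r : ℤ} (hts : t ⊆ s)
    (hf : ∀ x ∈ s, |f x| ≤ r) : |∑ x ∈ t, f x| ≤ |∑ x ∈ s, f x| + #(s \ t) * r := by
  have hrest := abs_sum_le_card_mul (s \ t) f fun x hx => hf x (mem_sdiff.1 hx).1
  have hsplit := sum_sdiff hts (f := f)
  have := abs_sub (∑ x ∈ s, f x) (∑ x ∈ s \ t, f x)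
  rw [← hsplit, add_sub_cancel_left] at this
  rw [← hsplit]
  linarith

theorem card_le_card_sdiff_biUnion_add (A : Finset ι) (P : Finset (Finset ι)) {L : ℕ}
    (hP : ∀ c ∈ P, #c ≤ L) : #A ≤ #(A \ P.biUnion id) + #P * L :=
  card_le_card_sdiff_add_card.trans (Nat.add_le_add_left (card_biUnion_le.trans
    (by simpa using sum_le_card_nsmul P card _ hP)) _)

theorem exists_short_sum_eq_zero (g : ι → ℤ) (A : Finset ι) (r : ℕ) (hb : ∀ x ∈ A, |g x| ≤ r)
    (hpos : r * (r - 1) < #{x ∈ A | 0 < g x}) (hneg : r * (r - 1) < #{x ∈ A | g x < 0}) :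
    ∃ c ⊆ A, c.Nonempty ∧ #c ≤ 2 * r ∧ ∑ x ∈ c, g x = 0 := by
  have hmaps : ∀ (p : ℤ → Prop) [DecidablePred p], (∀ y, p y → y ≠ 0) →
      ∀ x ∈ {x ∈ A | p (g x)}, (g x).natAbs ∈ Icc 1 r := by
    intro p _ hp x hx
    rw [mem_filter] at hx
    have := hp _ hx.2
    have := abs_le.1 (hb x hx.1)
    rw [mem_Icc]
    omega
  obtain ⟨a, ha, hac⟩ := exists_lt_card_fiber_of_mul_lt_card_of_maps_to
    (hmaps (0 < ·) fun _ h => h.ne') (by simpa using hpos)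
  obtain ⟨b, hb, hbc⟩ := exists_lt_card_fiber_of_mul_lt_card_of_maps_to
    (hmaps (· < 0) fun _ h => h.ne) (by simpa using hneg)
  rw [mem_Icc] at ha hb
  -- `b` elements of value `a` together with `a` elements of value `-b`
  obtain ⟨c₁, hc₁, hc₁b⟩ :=
    exists_subset_card_eq (n := b) (Nat.le_trans (by omega) (Nat.succ_le_of_lt hac))
  obtain ⟨c₂, hc₂, hc₂a⟩ :=
    exists_subset_card_eq (n := a) (Nat.le_trans (by omega) (Nat.succ_le_of_lt hbc))
  have hg₁ : ∀ x ∈ c₁, g x = a := fun x hx => by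
    have h := hc₁ hx
    simp only [mem_filter] at h
    omega
  have hg₂ : ∀ x ∈ c₂, g x = -b := fun x hx => by
    have h := hc₂ hx
    simp only [mem_filter] at h
    omega
  have hdisj : Disjoint c₁ c₂ := disjoint_left.2 fun x h₁ h₂ => by
    have := hg₁ x h₁
    have := hg₂ x h₂
    omega
  refine ⟨c₁ ∪ c₂, union_subset (hc₁.trans ?_) (hc₂.trans ?_), ?_, ?_, ?_⟩
  · exact (filter_subset _ _).trans (filter_subset _ _)
  · exact (filter_subset _ _).trans (filter_subset _ _)
  · exact (card_pos.1 (by omega)).mono subset_union_left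
  · rw [card_union_of_disjoint hdisj]
    omega
  · rw [sum_union hdisj, sum_eq_card_nsmul hg₁, sum_eq_card_nsmul hg₂, hc₁b, hc₂a]
    simp only [nsmul_eq_mul]
    ring

theorem card_le_of_forall_not_sum_eq_zero (g : ι → ℤ) (A : Finset ι) (r : ℕ)
    (hb : ∀ x ∈ A, |g x| ≤ r)
    (h : ∀ c ⊆ A, c.Nonempty → ¬(#c ≤ 2 * r + 1 ∧ ∑ x ∈ c, g x = 0)) :
    (#A : ℤ) ≤ r ^ 2 * (r + 1) + |∑ x ∈ A, g x| := by
  have h0 : ∀ x ∈ A, g x ≠ 0 := fun x hx hx0 =>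
    h {x} (singleton_subset_iff.2 hx) (singleton_nonempty x) ⟨by simp, by simpa⟩
  have hm : ((r * (r - 1) : ℕ) : ℤ) * (r + 1) ≤ r ^ 2 * (r + 1) := by
    gcongr
    exact_mod_cast (Nat.mul_le_mul_left r (Nat.sub_le r 1)).trans_eq (sq r).symm
  rcases le_or_gt #{x ∈ A | 0 < g x} (r * (r - 1)) with hpos | hpos
  · have := card_le_mul_sub_sum g A r _ h0 (fun x hx => (abs_le.1 (hb x hx)).2) hpos
    linarith [neg_abs_le (∑ x ∈ A, g x)]
  · have hneg : #{x ∈ A | g x < 0} ≤ r * (r - 1) := by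
      by_contra! hneg
      obtain ⟨c, hcA, hc, hcr, hsum⟩ := exists_short_sum_eq_zero g A r hb hpos hneg
      exact h c hcA hc ⟨by omega, hsum⟩
    have := card_le_mul_sub_sum (fun x => -g x) A r _ (by simpa using h0)
      (fun x hx => by linarith [(abs_le.1 (hb x hx)).1]) (by simpa using hneg)
    rw [sum_neg_distrib] at this
    linarith [le_abs_self (∑ x ∈ A, g x)]

theorem exists_maximal_packing (p : Finset ι → Prop) (A : Finset ι) :
    ∃ P : Finset (Finset ι), (P : Set (Finset ι)).PairwiseDisjoint id ∧
      (∀ c ∈ P, c ⊆ A ∧ c.Nonempty ∧ p c) ∧ ∀ c ⊆ A \ P.biUnion id, c.Nonempty → ¬p c := by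
  induction A using Finset.strongInduction with
  | H A ih =>
    by_cases h : ∃ c ⊆ A, c.Nonempty ∧ p c
    · obtain ⟨c, hcA, hc, hpc⟩ := h
      obtain ⟨P, hdisj, hP, hmax⟩ := ih (A \ c) (sdiff_ssubset hcA hc)
      refine ⟨insert c P, ?_, ?_, ?_⟩
      · rw [coe_insert]
        exact hdisj.insert fun c' hc' _ => disjoint_of_subset_right (hP c' hc').1 disjoint_sdiff
      · simp only [mem_insert, forall_eq_or_imp]
        exact ⟨⟨hcA, hc, hpc⟩, fun c' hc' => ⟨(hP c' hc').1.trans sdiff_subset, (hP c' hc').2⟩⟩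
      · rwa [biUnion_insert, id, show A \ (c ∪ P.biUnion id) = (A \ c) \ P.biUnion id from
          sdiff_sdiff_left.symm]
    · push Not at h
      exact ⟨∅, by simp, by simp, by simpa using h⟩

theorem exists_zero_sum_packing (g : ι → ℤ) (A : Finset ι) (r : ℕ) (hb : ∀ x ∈ A, |g x| ≤ r) :
    ∃ P : Finset (Finset ι), (P : Set (Finset ι)).PairwiseDisjoint id ∧
      (∀ c ∈ P, c ⊆ A ∧ c.Nonempty ∧ #c ≤ 2 * r + 1 ∧ ∑ x ∈ c, g x = 0) ∧
      (#(A \ P.biUnion id) : ℤ) ≤ r ^ 2 * (r + 1) + |∑ x ∈ A, g x| := by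
  obtain ⟨P, hdisj, hP, hmax⟩ :=
    exists_maximal_packing (fun c => #c ≤ 2 * r + 1 ∧ ∑ x ∈ c, g x = 0) A
  have hPA : P.biUnion id ⊆ A := biUnion_subset.2 fun c hc => (hP c hc).1
  have hsum : ∑ x ∈ A \ P.biUnion id, g x = ∑ x ∈ A, g x := by
    rw [sum_sdiff_eq_sub hPA, sum_biUnion hdisj, sub_eq_self]
    exact sum_eq_zero fun c hc => (hP c hc).2.2.2
  refine ⟨P, hdisj, hP, hsum ▸ ?_⟩
  exact card_le_of_forall_not_sum_eq_zero g _ r (fun x hx => hb x (mem_sdiff.1 hx).1) hmax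

end ZeroSum

theorem exists_nonempty_subset_sum_eq_zero (d r B : ℕ) :
    ∃ G : ℕ, ∀ {ι J : Type*} [DecidableEq ι] (s : Finset J) (A : Finset ι) (φ : ι → J → ℤ),
      #s = d → (∀ x ∈ A, ∀ j ∈ s, |φ x j| ≤ r) → (∀ j ∈ s, |∑ x ∈ A, φ x j| ≤ B) →
      G < #A → ∃ Z ⊆ A, Z.Nonempty ∧ ∀ j ∈ s, ∑ x ∈ Z, φ x j = 0 := by
  induction d generalizing r B with
  | zero =>
    exact ⟨0, fun s A φ hs _ _ hA =>
      ⟨A, subset_refl A, card_pos.1 hA, by simp [card_eq_zero.1 hs]⟩⟩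
  | succ d ih =>
    classical
    obtain ⟨G, hG⟩ := ih ((2 * r + 1) * r) (B + (r ^ 2 * (r + 1) + B) * r)
    refine ⟨r ^ 2 * (r + 1) + B + (2 * r + 1) * G, fun {ι J} _ s A φ hs hb hsum hA => ?_⟩
    obtain ⟨j₀, hj₀⟩ : s.Nonempty := card_pos.1 (by omega)
    obtain ⟨P, hdisj, hP, hR⟩ := exists_zero_sum_packing (φ · j₀) A r fun x hx => hb x hx j₀ hj₀
    have hPA : P.biUnion id ⊆ A := biUnion_subset.2 fun c hc => (hP c hc).1
    have hblocks : ∀ j, ∑ c ∈ P, ∑ x ∈ c, φ x j = ∑ x ∈ P.biUnion id, φ x j :=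
      fun j => (sum_biUnion hdisj).symm
    have hR' : (#(A \ P.biUnion id) : ℤ) ≤ r ^ 2 * (r + 1) + B := by
      linarith [hsum j₀ hj₀]
    -- the blocks of `P`, each replaced by its sum, form a family of dimension `d`
    obtain ⟨Q, hQP, hQ, hQsum⟩ := hG (s.erase j₀) P (fun c j => ∑ x ∈ c, φ x j)
      (by rw [card_erase_of_mem hj₀, hs, Nat.add_sub_cancel])
      (fun c hc j hj => by
        refine (abs_sum_le_card_mul c _ fun x hx =>
          hb x ((hP c hc).1 hx) j (mem_of_mem_erase hj)).trans ?_
        push_cast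
        gcongr
        exact_mod_cast (hP c hc).2.2.1)
      (fun j hj => by
        have hj' := mem_of_mem_erase hj
        rw [hblocks]
        refine (abs_sum_le_abs_sum_add_card_sdiff_mul _ hPA fun x hx => hb x hx j hj').trans ?_
        push_cast
        exact add_le_add (hsum j hj') (mul_le_mul_of_nonneg_right hR' (by positivity)))
      (by
        have hcover := card_le_card_sdiff_biUnion_add A P fun c hc => (hP c hc).2.2.1
        have : (2 * r + 1) * G < (2 * r + 1) * #P := by zify at hcover hA ⊢; linarith
        exact Nat.lt_of_mul_lt_mul_left this)
    refine ⟨Q.biUnion id, (biUnion_subset_biUnion_of_subset_left _ hQP).trans hPA, ?_,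
      fun j hj => ?_⟩
    · obtain ⟨c, hc⟩ := hQ
      exact biUnion_nonempty.2 ⟨c, hc, (hP c (hQP hc)).2.1⟩
    · rw [sum_biUnion (hdisj.subset (coe_subset.2 hQP))]
      by_cases hjj : j = j₀
      · subst hjj
        exact sum_eq_zero fun c hc => (hP c (hQP hc)).2.2.2
      · exact hQsum j (mem_erase.2 ⟨hjj, hj⟩)

theorem exists_subset_sum_eq_zero_card_sdiff_le (d r B : ℕ) :
    ∃ G : ℕ, ∀ {ι J : Type*} [DecidableEq ι] (s : Finset J) (A : Finset ι) (φ : ι → J → ℤ),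
      #s = d → (∀ x ∈ A, ∀ j ∈ s, |φ x j| ≤ r) → (∀ j ∈ s, |∑ x ∈ A, φ x j| ≤ B) →
      ∃ Y ⊆ A, #(A \ Y) ≤ G ∧ ∀ j ∈ s, ∑ x ∈ Y, φ x j = 0 := by
  obtain ⟨G, hG⟩ := exists_nonempty_subset_sum_eq_zero d r B
  refine ⟨G, fun s A φ hs hb hsum => ?_⟩
  obtain ⟨Y, hY, hYmax⟩ :=
    exists_max_image {Y ∈ A.powerset | ∀ j ∈ s, ∑ x ∈ Y, φ x j = 0} card ⟨∅, by simp⟩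
  rw [mem_filter, mem_powerset] at hY
  refine ⟨Y, hY.1, not_lt.1 fun hlt => ?_, hY.2⟩
  -- a zero-sum part of the complement could be added to `Y`
  obtain ⟨Z, hZ, hZne, hZsum⟩ := hG s (A \ Y) φ hs (fun x hx => hb x (mem_sdiff.1 hx).1)
    (fun j hj => by rw [sum_sdiff_eq_sub hY.1, hY.2 j hj, sub_zero]; exact hsum j hj) hlt
  have hdisj : Disjoint Y Z := disjoint_of_subset_right hZ disjoint_sdiff
  have hYZ := hYmax (Y ∪ Z) (by
    rw [mem_filter, mem_powerset]
    refine ⟨union_subset hY.1 (hZ.trans sdiff_subset), fun j hj => ?_⟩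
    rw [sum_union hdisj, hY.2 j hj, hZsum j hj, add_zero])
  rw [card_union_of_disjoint hdisj] at hYZ
  have := hZne.card_pos
  omega

theorem exists_subset_card_gt_forall_lt_add {α : Type*} (f : α → ℕ) (s : Finset α) {q B m : ℕ}
    (hB : 0 < B) (hf : ∀ x ∈ s, f x < q * B) (hs : q * m < #s) :
    ∃ T ⊆ s, m < #T ∧ ∀ a ∈ T, ∀ b ∈ T, f a < f b + B := by
  obtain ⟨i, -, hi⟩ := exists_lt_card_fiber_of_mul_lt_card_of_maps_to (f := (f · / B))
    (t := range q) (fun x hx => mem_range.2 (Nat.div_lt_of_lt_mul (mul_comm q B ▸ hf x hx)))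
    (by simpa using hs)
  refine ⟨_, filter_subset _ _, hi, fun a ha b hb => ?_⟩
  rw [mem_filter] at ha hb
  have ha' := Nat.lt_div_mul_add (a := f a) hB
  have hb' := Nat.div_mul_le_self (f b) B
  rw [ha.2] at ha'
  rw [hb.2] at hb'
  omega

section Ramsey

variable {κ : Type*} [DecidableEq κ]

theorem exists_subset_colour_eq_endpoint_colour (t : Finset κ) (m : ℕ) :
    ∃ N : ℕ, ∀ {V : Type*} [DecidableEq V] (f : V → V → κ), (∀ u v, f u v = f v u) →
      (∀ u v, f u v ∈ t) → ∀ W : Finset V, N ≤ #W → ∃ S ⊆ W, m ≤ #S ∧ ∃ χ : V → κ,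
        (∀ u ∈ S, χ u ∈ t) ∧ ∀ u ∈ S, ∀ v ∈ S, u ≠ v → f u v = χ u ∨ f u v = χ v := by
  induction m with
  | zero => exact ⟨0, fun f _ _ W _ => ⟨∅, empty_subset W, le_rfl, fun u => f u u, by simp⟩⟩
  | succ m ih =>
    obtain ⟨N, hN⟩ := ih
    refine ⟨#t * N + 1, fun f hsymm hf W hW => ?_⟩
    obtain ⟨v, hv⟩ : W.Nonempty := card_pos.1 (by omega)
    -- `i` becomes the colour of `v`: it joins `v` to every vertex chosen after it
    obtain ⟨i, hi, hiN⟩ := exists_le_card_fiber_of_mul_le_card_of_maps_to (f := f v)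
      (s := W.erase v) (n := N) (fun u _ => hf v u) ⟨_, hf v v⟩
      (by rw [card_erase_of_mem hv]; omega)
    obtain ⟨S, hSW, hmS, χ, hχt, hχ⟩ := hN f hsymm hf _ hiN
    have hvS : v ∉ S := fun h => by simpa using hSW h
    have hfv : ∀ u ∈ S, f v u = i := fun u hu => (mem_filter.1 (hSW hu)).2
    have hχv : ∀ u ∈ S, Function.update χ v i u = χ u := fun u hu =>
      Function.update_of_ne (ne_of_mem_of_not_mem hu hvS) _ _
    refine ⟨insert v S, insert_subset hv (hSW.trans ((filter_subset _ _).trans (erase_subset _ _))),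
      by rw [card_insert_of_notMem hvS]; omega, Function.update χ v i, ?_, ?_⟩
    · intro u hu
      rcases mem_insert.1 hu with rfl | hu
      · simpa using hi
      · rw [hχv u hu]
        exact hχt u hu
    · intro a ha b hb hab
      rcases mem_insert.1 ha with rfl | haS <;> rcases mem_insert.1 hb with rfl | hbS
      · exact absurd rfl hab
      · simp [hfv b hbS]
      · simp [hsymm a, hfv a haS]
      · rw [hχv a haS, hχv b hbS]
        exact hχ a haS b hbS hab

theorem exists_monochromatic_subset (t : Finset κ) (m : ℕ) :
    ∃ N : ℕ, ∀ {V : Type*} [DecidableEq V] (f : V → V → κ), (∀ u v, f u v = f v u) →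
      (∀ u v, f u v ∈ t) → ∀ W : Finset V, N ≤ #W →
        ∃ S ⊆ W, #S = m ∧ ∃ c, ∀ u ∈ S, ∀ v ∈ S, u ≠ v → f u v = c := by
  obtain ⟨N, hN⟩ := exists_subset_colour_eq_endpoint_colour t (#t * m + 1)
  refine ⟨N, fun f hsymm hf W hW => ?_⟩
  obtain ⟨S, hSW, hS, χ, hχt, hχ⟩ := hN f hsymm hf W hW
  obtain ⟨c, -, hc⟩ := exists_lt_card_fiber_of_mul_lt_card_of_maps_to hχt (by omega : #t * m < #S)
  obtain ⟨T, hT, hTm⟩ := exists_subset_card_eq hc.le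
  refine ⟨T, hT.trans ((filter_subset _ _).trans hSW), hTm, c, fun u hu v hv huv => ?_⟩
  have hu' := mem_filter.1 (hT hu)
  have hv' := mem_filter.1 (hT hv)
  rcases hχ u hu'.1 v hv'.1 huv with h | h
  · rw [h, hu'.2]
  · rw [h, hv'.2]

end Ramsey

section WeightedDegree

variable {V : Type*} [DecidableEq V]

def weightedDegree (w : V → V → ℕ) (S : Finset V) (u : V) : ℕ :=
  ∑ a ∈ S.erase u, w u a

theorem weightedDegree_union (w : V → V → ℕ) {U Y : Finset V} {u : V} (hu : u ∈ U)
    (h : Disjoint U Y) : weightedDegree w (U ∪ Y) u = weightedDegree w U u + ∑ a ∈ Y, w u a := by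
  rw [weightedDegree, weightedDegree, erase_union_distrib, erase_eq_of_notMem
    (disjoint_left.1 h hu), sum_union (disjoint_of_subset_left (erase_subset _ _) h)]

theorem weightedDegree_le {w : V → V → ℕ} {r : ℕ} (hw : ∀ u v, w u v ≤ r) (S : Finset V) (u : V) :
    weightedDegree w S u ≤ #S * r :=
  (sum_le_card_nsmul _ _ _ fun a _ => hw u a).trans
    (by rw [smul_eq_mul]; exact Nat.mul_le_mul_right r (card_erase_le))

theorem weightedDegree_eq_of_forall_eq {w : V → V → ℕ} {U : Finset V} {u : V} {c : ℕ}
    (hu : u ∈ U) (hc : ∀ v ∈ U, u ≠ v → w u v = c) : weightedDegree w U u = (#U - 1) * c := by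
  rw [weightedDegree, sum_const_nat fun v hv => hc v (mem_erase.1 hv).2 (mem_erase.1 hv).1.symm,
    card_erase_of_mem hu]

theorem exists_superset_weightedDegree_eq (k r B : ℕ) :
    ∃ G : ℕ, ∀ {V : Type*} [Fintype V] [DecidableEq V] (w : V → V → ℕ) (U : Finset V),
      (∀ u v, w u v ≤ r) → #U = k →
      (∀ u ∈ U, ∀ v ∈ U, weightedDegree w U u = weightedDegree w U v) →
      (∀ u ∈ U, ∀ v ∈ U, weightedDegree w univ u ≤ weightedDegree w univ v + B) →
      ∃ S, U ⊆ S ∧ Fintype.card V ≤ #S + G ∧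
        ∀ u ∈ U, ∀ v ∈ U, weightedDegree w S u = weightedDegree w S v := by
  obtain ⟨G, hG⟩ := exists_subset_sum_eq_zero_card_sdiff_le (k * k) r B
  refine ⟨G, fun {V} _ _ w U hw hU hint hdeg => ?_⟩
  have hUA : Disjoint U (univ \ U) := disjoint_sdiff
  have hdegA : ∀ u ∈ U, weightedDegree w univ u = weightedDegree w U u + ∑ a ∈ univ \ U, w u a :=
    fun u hu => by rw [← weightedDegree_union w hu hUA, union_sdiff_of_subset (subset_univ U)]
  obtain ⟨Y, hYA, hYcard, hY⟩ := hG (U ×ˢ U) (univ \ U) (fun x p => (w p.1 x : ℤ) - w p.2 x)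
    (by rw [card_product, hU])
    (fun x _ p _ => by
      have := hw p.1 x
      have := hw p.2 x
      rw [abs_le]
      omega)
    (fun p hp => by
      rw [mem_product] at hp
      have := hdegA p.1 hp.1
      have := hdegA p.2 hp.2
      have := hint p.1 hp.1 p.2 hp.2
      have := hdeg p.1 hp.1 p.2 hp.2
      have := hdeg p.2 hp.2 p.1 hp.1
      rw [sum_sub_distrib, abs_le]
      push_cast [← Nat.cast_sum]
      omega)
  have hUY : Disjoint U Y := disjoint_of_subset_right hYA hUA
  refine ⟨U ∪ Y, subset_union_left, ?_, fun u hu v hv => ?_⟩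
  · rw [card_union_of_disjoint hUY]
    have := card_sdiff_of_subset hYA
    have := card_univ_sdiff U
    have := card_le_card hYA
    omega
  · have huv := hY (u, v) (mem_product.2 ⟨hu, hv⟩)
    rw [sum_sub_distrib, sub_eq_zero] at huv
    rw [weightedDegree_union w hu hUY, weightedDegree_union w hv hUY, hint u hu v hv]
    have huv' : ∑ a ∈ Y, w u a = ∑ a ∈ Y, w v a := by exact_mod_cast huv
    rw [huv']

end WeightedDegree

theorem stmt_14_general (k r : ℕ) :
    ∃ C : ℕ, ∀ n : ℕ, ∀ w : Fin n → Fin n → ℕ,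
      (∀ u v, w u v = w v u) → (∀ u v, w u v ≤ r) →
      ∃ S : Finset (Fin n), n - C ≤ S.card ∧
        ∃ T ⊆ S, min k (n - C) ≤ T.card ∧
          ∀ u ∈ T, ∀ v ∈ T,
            (∑ a ∈ S.erase u, w u a) = ∑ a ∈ S.erase v, w v a := by
  obtain ⟨K, hK⟩ := exists_monochromatic_subset (range (r + 1)) k
  obtain ⟨G, hG⟩ := exists_superset_weightedDegree_eq k r ((2 * K + 1) * (r + 1))
  refine ⟨2 * K + 1 + G, fun n w hsymm hw => ?_⟩
  rcases le_or_gt n (2 * K) with hn | hn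
  · exact ⟨∅, by simp; omega, ∅, empty_subset _, by simp; omega, by simp⟩
  -- `n / (2K + 1) + 1` buckets of width `(2K + 1)(r + 1)` cover the degrees, which are `≤ n r`
  have hbuckets := Nat.lt_div_mul_add (a := n) (b := 2 * K + 1) (by omega)
  have hfill := Nat.div_mul_le_self n (2 * K + 1)
  obtain ⟨W, -, hKW, hW⟩ := exists_subset_card_gt_forall_lt_add (weightedDegree w univ) univ
    (q := n / (2 * K + 1) + 1) (B := (2 * K + 1) * (r + 1)) (m := K) (by positivity)
    (fun v _ => by
      have := weightedDegree_le hw univ v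
      simp only [card_univ, Fintype.card_fin] at this
      nlinarith)
    (by simp only [card_univ, Fintype.card_fin]; nlinarith)
  obtain ⟨U, hUW, hU, c, hc⟩ :=
    hK w hsymm (fun u v => mem_range.2 (Nat.lt_succ_of_le (hw u v))) W hKW.le
  obtain ⟨S, hUS, hS, hdeg⟩ := hG w U hw hU
    (fun u hu v hv => by
      rw [weightedDegree_eq_of_forall_eq hu (hc u hu), weightedDegree_eq_of_forall_eq hv (hc v hv)])
    (fun u hu v hv => (hW u (hUW hu) v (hUW hv)).le)
  refine ⟨S, by simp only [Fintype.card_fin] at hS; omega, U, hUS, hU ▸ min_le_left _ _, hdeg⟩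

theorem stmt_14 (k r : ℕ) (hk : 0 < k) (hr : 0 < r) :
    ∃ C : ℕ, ∀ n : ℕ, ∀ w : Fin n → Fin n → ℕ,
      (∀ u v, w u v = w v u) → (∀ u v, w u v ≤ r) →
      ∃ S : Finset (Fin n), n - C ≤ S.card ∧
        ∃ T ⊆ S, min k (n - C) ≤ T.card ∧
          ∀ u ∈ T, ∀ v ∈ T,
            (∑ a ∈ S.erase u, w u a) = ∑ a ∈ S.erase v, w v a :=
  stmt_14_general k r
end

section
/- For every sufficiently large k there are infinitely many graphs G such that for every set X of fewer than (k·ln k)/10 vertices, the graph G − X does not contain k vertices of the same degree. Hence C(k) = Ω(k log k). -/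
/-!
Take the half graph `H` on `m` vertices (`i ~ j` iff `i + j ≥ m`), in which no degree occurs more
than twice, and replace each vertex by a copy of the union `D` of `2^i` cliques of size `2^(b-i)`
(`i ≤ b`), with copies of adjacent vertices completely joined; each class then has
`q = (b+1) 2^b` vertices and `D` has maximum degree `< 2^b`. After deleting fewer than `b 2^b`
vertices, the degree of a vertex is `q · deg_H` of its class up to an error smaller than `q`, so
vertices of equal degree lie in at most two classes. Inside one class, vertices of equal degree
`s - 1` lie in cliques of size `≥ s`, of which there are fewer than `2^(b+1)/s`, and each holds at
most `s` of them; so fewer than `2^(b+2) ≤ k` vertices share a degree. With `2^(b+2) ≤ k < 2^(b+3)`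
one has `k ln k / 10 ≤ b 2^b`.
-/

open Finset

lemma Finset.card_filter_mk_mem_le {α β : Type*} [Fintype β] [DecidableEq α] [DecidableEq β]
    (X : Finset (α × β)) (a : α) : #({b | (a, b) ∈ X} : Finset β) ≤ #X :=
  card_le_card_of_injOn (Prod.mk a) (fun b hb ↦ by simpa using hb)
    (Prod.mk_right_injective a).injOn

lemma Fin.card_filter_le_val_add {m : ℕ} (i : Fin m) :
    #{j : Fin m | m ≤ (i : ℕ) + j} = i := by
  have : ({j : Fin m | m ≤ (i : ℕ) + j} : Finset _).map Fin.valEmbedding = Ico (m - i) m := by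
    ext x
    simp only [mem_map, mem_filter, mem_univ, true_and, Fin.valEmbedding_apply, mem_Ico]
    constructor
    · rintro ⟨j, hj, rfl⟩
      omega
    · intro hx
      exact ⟨⟨x, hx.2⟩, by simp; omega, rfl⟩
  rw [← card_map Fin.valEmbedding, this, Nat.card_Ico]
  omega

-- The left side is `s` times the number of cliques of size `≥ s` in `dyadicCliqueUnion n`.
lemma mul_sum_ite_two_pow_le (s n : ℕ) :
    s * ∑ i ∈ range (n + 1), (if s ≤ 2 ^ (n - i) then 2 ^ i else 0) ≤ 2 ^ (n + 1) - s := by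
  induction n with
  | zero =>
    rcases Nat.lt_or_ge s 2 with h | h
    · interval_cases s <;> simp
    · simp [show ¬ s ≤ 1 by omega]
  | succ n ih =>
    have hshift :
        ∑ i ∈ range (n + 1), (if s ≤ 2 ^ (n + 1 - (i + 1)) then 2 ^ (i + 1) else 0) =
        2 * ∑ i ∈ range (n + 1), (if s ≤ 2 ^ (n - i) then 2 ^ i else 0) := by
      rw [mul_sum]
      refine sum_congr rfl fun i _ ↦ ?_
      rw [Nat.add_sub_add_right, pow_succ, mul_ite, mul_zero, mul_comm]
    rw [sum_range_succ', hshift, Nat.sub_zero, pow_zero, pow_succ 2 (n + 1)]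
    set A := ∑ i ∈ range (n + 1), (if s ≤ 2 ^ (n - i) then 2 ^ i else 0)
    split_ifs with h
    · have : s * (2 * A + 1) = 2 * (s * A) + s := by ring
      omega
    · have : s * (2 * A + 0) = 2 * (s * A) := by ring
      omega

namespace SimpleGraph

variable {V W C : Type*}

/-- The lexicographic product `H[D]`: the `|C|`-blowup of `H` with a copy of `D` placed inside
every class. -/
def lexProd (H : SimpleGraph W) (D : SimpleGraph C) : SimpleGraph (W × C) where
  Adj x y := H.Adj x.1 y.1 ∨ x.1 = y.1 ∧ D.Adj x.2 y.2
  symm := ⟨fun _ _ ↦ Or.imp H.adj_symm fun h ↦ ⟨h.1.symm, h.2.symm⟩⟩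
  loopless := ⟨fun _ ↦ by rintro (h | ⟨-, h⟩) <;> exact h.ne rfl⟩

@[simp]
lemma lexProd_adj {H : SimpleGraph W} {D : SimpleGraph C} {x y : W × C} :
    (H.lexProd D).Adj x y ↔ H.Adj x.1 y.1 ∨ x.1 = y.1 ∧ D.Adj x.2 y.2 :=
  Iff.rfl

variable [Fintype V] [Fintype W] [Fintype C] [DecidableEq V] [DecidableEq W] [DecidableEq C]

def degreeOutside (G : SimpleGraph V) [DecidableRel G.Adj] (X : Finset V) (v : V) : ℕ :=
  #{a ∈ Xᶜ | G.Adj v a}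

/-- Deleting any fewer than `B` vertices from `G` leaves a graph of repetition number at most `r`,
where the repetition number is the largest number of vertices of equal degree. -/
def RepetitionAtMost (G : SimpleGraph V) [DecidableRel G.Adj] (B r : ℕ) : Prop :=
  ∀ X T : Finset V, #X < B → (∀ v ∈ T, v ∉ X) →
    (∀ u ∈ T, ∀ v ∈ T, G.degreeOutside X u = G.degreeOutside X v) → #T ≤ r

section degreeOutside

variable (G : SimpleGraph V) [DecidableRel G.Adj]

lemma degreeOutside_empty (v : V) : G.degreeOutside ∅ v = G.degree v := by
  simp [degreeOutside, ← card_neighborFinset_eq_degree, neighborFinset_eq_filter]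

lemma degreeOutside_le_degree (X : Finset V) (v : V) : G.degreeOutside X v ≤ G.degree v := by
  rw [← degreeOutside_empty]
  exact card_le_card (filter_subset_filter _ (by simp))

end degreeOutside

lemma Iso.degreeOutside_map {G : SimpleGraph V} {G' : SimpleGraph W} [DecidableRel G.Adj]
    [DecidableRel G'.Adj] (e : G ≃g G') (X : Finset V) (v : V) :
    G'.degreeOutside (X.map e.toEquiv.toEmbedding) (e v) = G.degreeOutside X v := by
  unfold degreeOutside
  rw [← card_map e.toEquiv.toEmbedding]
  congr 1
  ext a
  obtain ⟨a, rfl⟩ := e.surjective a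
  simp [-mem_map_equiv, mem_map, e.map_adj_iff]

lemma RepetitionAtMost.of_iso {G : SimpleGraph V} {G' : SimpleGraph W} [DecidableRel G.Adj]
    [DecidableRel G'.Adj] (e : G ≃g G') {B r : ℕ} (h : G.RepetitionAtMost B r) :
    G'.RepetitionAtMost B r := by
  intro X T hX hTX hT
  have hdeg := e.symm.degreeOutside_map X
  set f := e.symm.toEquiv.toEmbedding
  rw [← card_map f]
  refine h (X.map f) (T.map f) (by rwa [card_map]) ?_ ?_
  · simp only [forall_mem_map]
    intro u hu
    simpa [f, -mem_map_equiv, mem_map] using hTX u hu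
  · simp only [forall_mem_map]
    intro u hu v hv
    exact (hdeg u).trans ((hT u hu v hv).trans (hdeg v).symm)

section lexProd

variable {H : SimpleGraph W} {D : SimpleGraph C} [DecidableRel H.Adj] [DecidableRel D.Adj]

instance : DecidableRel (H.lexProd D).Adj := fun x y ↦
  inferInstanceAs (Decidable (H.Adj x.1 y.1 ∨ x.1 = y.1 ∧ D.Adj x.2 y.2))

lemma degreeOutside_lexProd (X : Finset (W × C)) (w : W) (c : C) :
    (H.lexProd D).degreeOutside X (w, c) =
      #((H.neighborFinset w ×ˢ univ) \ X) +
        D.degreeOutside ({c' | (w, c') ∈ X} : Finset C) c := by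
  set inClass := ({c' ∈ ({c' | (w, c') ∈ X} : Finset C)ᶜ | D.Adj c c'} : Finset C).map
    (Function.Embedding.sectR w C)
  have hsplit : {a ∈ Xᶜ | (H.lexProd D).Adj (w, c) a} =
      (H.neighborFinset w ×ˢ univ) \ X ∪ inClass := by
    ext ⟨w', c'⟩
    simp [inClass]
    aesop
  have hdisj : Disjoint ((H.neighborFinset w ×ˢ univ) \ X) inClass := by
    simp only [Finset.disjoint_left, inClass, mem_sdiff, mem_product, mem_neighborFinset, mem_map,
      Function.Embedding.sectR_apply]
    rintro _ ⟨⟨h, -⟩, -⟩ ⟨c', -, rfl⟩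
    exact h.ne rfl
  rw [degreeOutside, hsplit, card_union_of_disjoint hdisj, card_map, degreeOutside]

lemma degree_mul_card_le_degreeOutside_lexProd (X : Finset (W × C)) (w : W) (c : C) :
    H.degree w * Fintype.card C ≤ (H.lexProd D).degreeOutside X (w, c) + #X := by
  rw [degreeOutside_lexProd, ← card_neighborFinset_eq_degree, ← card_univ, ← card_product]
  have := card_le_card_sdiff_add_card (s := H.neighborFinset w ×ˢ (univ : Finset C)) (t := X)
  omega

lemma degreeOutside_lexProd_le (X : Finset (W × C)) (w : W) (c : C) :
    (H.lexProd D).degreeOutside X (w, c) ≤ H.degree w * Fintype.card C + D.maxDegree := by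
  rw [degreeOutside_lexProd, ← card_neighborFinset_eq_degree, ← card_univ, ← card_product]
  gcongr
  · exact sdiff_subset
  · exact (D.degreeOutside_le_degree _ c).trans (D.degree_le_maxDegree c)

/-- A blown-up vertex sees `|C|` vertices per neighbour of its class, up to the `< |C|` vertices
deleted or adjacent inside the class; so equal degrees in `H[D] - X` force equal degrees in `H`. -/
lemma degree_le_of_degreeOutside_lexProd_eq {X : Finset (W × C)}
    (hX : #X + D.maxDegree < Fintype.card C) {w w' : W} {c c' : C}
    (h : (H.lexProd D).degreeOutside X (w, c) = (H.lexProd D).degreeOutside X (w', c')) :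
    H.degree w ≤ H.degree w' := by
  by_contra! hlt
  have hmul : (H.degree w' + 1) * Fintype.card C ≤ H.degree w * Fintype.card C :=
    Nat.mul_le_mul_right _ hlt
  have := degree_mul_card_le_degreeOutside_lexProd (H := H) (D := D) X w c
  have := degreeOutside_lexProd_le (H := H) (D := D) X w' c'
  rw [add_mul, one_mul] at hmul
  omega

theorem RepetitionAtMost.lexProd {B r R : ℕ} (hH : ∀ d, #{w | H.degree w = d} ≤ r)
    (hD : D.RepetitionAtMost B R) (hB : B + D.maxDegree ≤ Fintype.card C) :
    (H.lexProd D).RepetitionAtMost B (r * R) := by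
  intro X T hX hTX hT
  have hdeg : ∀ x ∈ T, ∀ y ∈ T, H.degree x.1 = H.degree y.1 := by
    rintro ⟨w, c⟩ hx ⟨w', c'⟩ hy
    exact le_antisymm (degree_le_of_degreeOutside_lexProd_eq (by omega) (hT _ hx _ hy))
      (degree_le_of_degreeOutside_lexProd_eq (by omega) (hT _ hy _ hx))
  have hclasses : #(T.image Prod.fst) ≤ r := by
    obtain rfl | ⟨x, hx⟩ := T.eq_empty_or_nonempty
    · simp
    refine (card_le_card fun w hw ↦ ?_).trans (hH (H.degree x.1))
    obtain ⟨y, hy, rfl⟩ := mem_image.1 hw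
    simpa using hdeg y hy x hx
  have hfiber : ∀ w, #{x ∈ T | x.1 = w} ≤ R := by
    intro w
    have : {x ∈ T | x.1 = w} =
        ({c | (w, c) ∈ T} : Finset C).map (Function.Embedding.sectR w C) := by
      ext ⟨w', c⟩
      simp only [mem_filter, mem_map, mem_univ, true_and, Function.Embedding.sectR_apply,
        Prod.mk.injEq]
      aesop
    rw [this, card_map]
    refine hD _ _ ((card_filter_mk_mem_le X w).trans_lt hX) ?_ ?_
    · simpa using fun c hc ↦ hTX (w, c) hc
    · intro c hc c' hc'
      have := hT (w, c) (by simpa using hc) (w, c') (by simpa using hc')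
      rw [degreeOutside_lexProd, degreeOutside_lexProd] at this
      omega
  calc #T ≤ R * #(T.image Prod.fst) := card_le_mul_card_image T R fun w _ ↦ hfiber w
    _ ≤ R * r := Nat.mul_le_mul_left R hclasses
    _ = r * R := mul_comm R r

end lexProd

def halfGraph (m : ℕ) : SimpleGraph (Fin m) where
  Adj i j := i ≠ j ∧ m ≤ (i : ℕ) + j
  symm := ⟨fun _ _ h ↦ ⟨h.1.symm, by omega⟩⟩
  loopless := ⟨fun _ h ↦ h.1 rfl⟩

instance (m : ℕ) : DecidableRel (halfGraph m).Adj := fun i j ↦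
  inferInstanceAs (Decidable (i ≠ j ∧ m ≤ (i : ℕ) + j))

lemma halfGraph_degree (m : ℕ) (i : Fin m) :
    (halfGraph m).degree i = if m ≤ 2 * (i : ℕ) then (i : ℕ) - 1 else i := by
  have hnbr : (halfGraph m).neighborFinset i =
      ({j | m ≤ (i : ℕ) + j} : Finset (Fin m)).erase i := by
    ext j
    rw [mem_neighborFinset]
    simp [halfGraph, eq_comm]
  rw [← card_neighborFinset_eq_degree, hnbr]
  split_ifs with h
  · rw [card_erase_of_mem (by simp; omega), Fin.card_filter_le_val_add]
  · rw [erase_eq_of_notMem (by simp; omega), Fin.card_filter_le_val_add]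

lemma card_filter_halfGraph_degree_eq_le_two (m d : ℕ) :
    #{i | (halfGraph m).degree i = d} ≤ 2 := by
  calc #{i | (halfGraph m).degree i = d} ≤ #({d, d + 1} : Finset ℕ) := by
        refine card_le_card_of_injOn Fin.val (fun i hi ↦ ?_) Fin.val_injective.injOn
        simp only [coe_filter, mem_univ, true_and, Set.mem_ofPred_eq, halfGraph_degree] at hi
        simp only [coe_insert, coe_singleton, Set.mem_insert_iff, Set.mem_singleton_iff]
        split_ifs at hi <;> omega
    _ ≤ 2 := card_le_two

section CliqueUnion

variable {ι : Type*} [Fintype ι] [DecidableEq ι] {P : ι → Type*} [∀ i, Fintype (P i)]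

lemma card_filter_sigma_fst_eq (i : ι) : #{x : Σ i, P i | x.1 = i} = Fintype.card (P i) := by
  rw [← card_univ, ← card_map (Function.Embedding.sigmaMk i)]
  congr 1
  ext ⟨j, y⟩
  simp [eq_comm]
  aesop

variable [∀ i, DecidableEq (P i)]

lemma degreeOutside_compl_completeMultipartiteGraph {Y : Finset (Σ i, P i)} {x : Σ i, P i}
    (hx : x ∉ Y) :
    (completeMultipartiteGraph P)ᶜ.degreeOutside Y x + 1 = #{y ∈ Yᶜ | y.1 = x.1} := by
  have : {y ∈ Yᶜ | (completeMultipartiteGraph P)ᶜ.Adj x y} =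
      ({y ∈ Yᶜ | y.1 = x.1} : Finset _).erase x := by
    ext y
    simp [eq_comm]
    tauto
  rw [degreeOutside, this, card_erase_add_one (by simpa using hx)]

lemma degree_compl_completeMultipartiteGraph (x : Σ i, P i) :
    (completeMultipartiteGraph P)ᶜ.degree x + 1 = Fintype.card (P x.1) := by
  rw [← degreeOutside_empty, degreeOutside_compl_completeMultipartiteGraph (notMem_empty x),
    compl_empty, card_filter_sigma_fst_eq]

lemma exists_card_le_of_compl_completeMultipartiteGraph {Y T : Finset (Σ i, P i)}
    (hTY : ∀ x ∈ T, x ∉ Y)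
    (hT : ∀ x ∈ T, ∀ y ∈ T, (completeMultipartiteGraph P)ᶜ.degreeOutside Y x =
      (completeMultipartiteGraph P)ᶜ.degreeOutside Y y) :
    ∃ s, 0 < s ∧ #T ≤ s * #{i | s ≤ Fintype.card (P i)} := by
  obtain rfl | ⟨x₀, hx₀⟩ := T.eq_empty_or_nonempty
  · exact ⟨1, one_pos, by simp⟩
  have hs : ∀ x ∈ T, #{y ∈ Yᶜ | y.1 = x.1} = #{y ∈ Yᶜ | y.1 = x₀.1} := by
    intro x hx
    have := degreeOutside_compl_completeMultipartiteGraph (hTY x hx)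
    have := degreeOutside_compl_completeMultipartiteGraph (hTY x₀ hx₀)
    have := hT x hx x₀ hx₀
    omega
  refine ⟨#{y ∈ Yᶜ | y.1 = x₀.1}, card_pos.2 ⟨x₀, by simpa using hTY x₀ hx₀⟩, ?_⟩
  calc #T ≤ #{y ∈ Yᶜ | y.1 = x₀.1} * #(T.image Sigma.fst) :=
        card_le_mul_card_image T _ fun i hi ↦ ?_
    _ ≤ _ := Nat.mul_le_mul_left _ (card_le_card fun i hi ↦ ?_)
  · obtain ⟨x, hx, rfl⟩ := mem_image.1 hi
    rw [← hs x hx]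
    exact card_le_card fun y hy ↦ by
      simp only [mem_filter, mem_compl] at hy ⊢
      exact ⟨hTY y hy.1, hy.2⟩
  · obtain ⟨x, hx, rfl⟩ := mem_image.1 hi
    simp only [mem_filter, mem_univ, true_and]
    rw [← hs x hx, ← card_filter_sigma_fst_eq]
    exact card_le_card (filter_subset_filter _ (subset_univ _))

end CliqueUnion

abbrev DyadicLabel (b : ℕ) := Σ i : Fin (b + 1), Fin (2 ^ (i : ℕ))

abbrev DyadicVertex (b : ℕ) := Σ ℓ : DyadicLabel b, Fin (2 ^ (b - ℓ.1))

/-- The graph `D_q` with `q = (b+1) 2^b`: for each `i ≤ b`, `2^i` disjoint cliques of size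
`2^(b-i)`. -/
def dyadicCliqueUnion (b : ℕ) : SimpleGraph (DyadicVertex b) :=
  (completeMultipartiteGraph fun ℓ : DyadicLabel b ↦ Fin (2 ^ (b - ℓ.1)))ᶜ

instance (b : ℕ) : DecidableRel (dyadicCliqueUnion b).Adj :=
  inferInstanceAs (DecidableRel (completeMultipartiteGraph _)ᶜ.Adj)

lemma card_dyadicVertex (b : ℕ) : Fintype.card (DyadicVertex b) = (b + 1) * 2 ^ b := by
  simp only [Fintype.card_sigma, Fintype.card_fin]
  rw [Fintype.sum_sigma]
  simp only [sum_const, card_univ, Fintype.card_fin, smul_eq_mul]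
  calc ∑ i : Fin (b + 1), 2 ^ (i : ℕ) * 2 ^ (b - i) = ∑ _i : Fin (b + 1), 2 ^ b :=
        sum_congr rfl fun i _ ↦ by rw [← pow_add, Nat.add_sub_cancel' (Fin.is_le i)]
    _ = (b + 1) * 2 ^ b := by simp

lemma maxDegree_dyadicCliqueUnion_le (b : ℕ) : (dyadicCliqueUnion b).maxDegree ≤ 2 ^ b - 1 := by
  refine maxDegree_le_of_forall_degree_le _ _ fun x ↦ ?_
  have h : (dyadicCliqueUnion b).degree x + 1 = 2 ^ (b - x.1.1) :=
    (degree_compl_completeMultipartiteGraph x).trans (Fintype.card_fin _)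
  have : 2 ^ (b - x.1.1) ≤ 2 ^ b := Nat.pow_le_pow_right two_pos (Nat.sub_le _ _)
  omega

lemma card_filter_dyadicLabel (b s : ℕ) :
    #{ℓ : DyadicLabel b | s ≤ 2 ^ (b - ℓ.1)} =
      ∑ i ∈ range (b + 1), (if s ≤ 2 ^ (b - i) then 2 ^ i else 0) := by
  rw [card_filter, Fintype.sum_sigma,
    ← Fin.sum_univ_eq_sum_range (fun i ↦ if s ≤ 2 ^ (b - i) then 2 ^ i else 0)]
  refine sum_congr rfl fun i _ ↦ ?_
  split_ifs <;> simp [*]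

theorem repetitionAtMost_dyadicCliqueUnion (b B : ℕ) :
    (dyadicCliqueUnion b).RepetitionAtMost B (2 ^ (b + 1) - 1) := by
  intro Y T _ hTY hT
  obtain ⟨s, hs, hT⟩ := exists_card_le_of_compl_completeMultipartiteGraph hTY hT
  simp only [Fintype.card_fin, card_filter_dyadicLabel] at hT
  have := mul_sum_ite_two_pow_le s b
  omega

-- Quantifying over the decidability instance lets this apply to the classical one.
theorem exists_fin_repetitionAtMost (b N : ℕ) : ∃ n, N ≤ n ∧ ∃ G : SimpleGraph (Fin n),
    ∀ [DecidableRel G.Adj], G.RepetitionAtMost (b * 2 ^ b) (2 * (2 ^ (b + 1) - 1)) := by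
  have hG : ((halfGraph (N + 1)).lexProd (dyadicCliqueUnion b)).RepetitionAtMost (b * 2 ^ b)
      (2 * (2 ^ (b + 1) - 1)) := by
    refine .lexProd (card_filter_halfGraph_degree_eq_le_two _)
      (repetitionAtMost_dyadicCliqueUnion b _) ?_
    have := maxDegree_dyadicCliqueUnion_le b
    have := Nat.one_le_two_pow (n := b)
    rw [card_dyadicVertex, add_mul, one_mul]
    omega
  refine ⟨_, ?_, _, hG.of_iso (Iso.map (Fintype.equivFin _) _)⟩
  rw [Fintype.card_prod, Fintype.card_fin, card_dyadicVertex]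
  exact N.le_succ.trans (Nat.le_mul_of_pos_right _ (by positivity))

end SimpleGraph

lemma mul_log_div_ten_le {b k : ℕ} (hb : 4 ≤ b) (hk : k < 2 ^ (b + 3)) :
    (k : ℝ) * Real.log k / 10 ≤ b * 2 ^ b := by
  rcases Nat.eq_zero_or_pos k with rfl | hk0
  · simp only [CharP.cast_eq_zero, zero_mul, zero_div]
    positivity
  have hk₁ : (k : ℝ) ≤ 8 * 2 ^ b := by
    have : (k : ℝ) < 2 ^ (b + 3) := by exact_mod_cast hk
    rw [pow_add] at this
    linarith
  have hlog : Real.log k ≤ (b + 3) * Real.log 2 := by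
    calc Real.log k ≤ Real.log (2 ^ (b + 3)) :=
          Real.log_le_log (by exact_mod_cast hk0) (by exact_mod_cast hk.le)
      _ = (b + 3) * Real.log 2 := by rw [Real.log_pow]; push_cast; ring
  have hlog₀ : 0 ≤ Real.log k := Real.log_nonneg (by exact_mod_cast hk0)
  have hb' : (4 : ℝ) ≤ b := by exact_mod_cast hb
  have hlog2 := Real.log_two_lt_d9
  calc (k : ℝ) * Real.log k / 10 ≤ 8 * 2 ^ b * ((b + 3) * Real.log 2) / 10 := by gcongr
    _ ≤ b * 2 ^ b := by
      have : 8 * ((b : ℝ) + 3) * Real.log 2 ≤ 10 * b := by nlinarith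
      have h2b : (0 : ℝ) < 2 ^ b := by positivity
      nlinarith

open scoped Classical in
theorem stmt_18 :
    ∃ K₀ : ℕ, ∀ k : ℕ, K₀ ≤ k → ∀ N : ℕ,
      ∃ (n : ℕ) (G : SimpleGraph (Fin n)), N ≤ n ∧
        ∀ X : Finset (Fin n), (X.card : ℝ) < k * Real.log k / 10 →
          ¬ ∃ T : Finset (Fin n), T.card = k ∧ (∀ v ∈ T, v ∉ X) ∧
            ∀ u ∈ T, ∀ v ∈ T,
              (Xᶜ.filter (fun a => G.Adj u a)).card =
                (Xᶜ.filter (fun a => G.Adj v a)).card := by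
  refine ⟨2 ^ 6, fun k hk N ↦ ?_⟩
  set b := Nat.log 2 k - 2
  have hlog : 6 ≤ Nat.log 2 k := Nat.le_log_of_pow_le one_lt_two hk
  have hkb : 2 ^ (b + 2) ≤ k := by
    rw [show b + 2 = Nat.log 2 k by omega]
    exact Nat.pow_log_le_self 2 (by omega)
  have hkb' : k < 2 ^ (b + 3) := by
    rw [show b + 3 = Nat.log 2 k + 1 by omega]
    exact Nat.lt_pow_succ_log_self one_lt_two k
  obtain ⟨n, hn, G, hG⟩ := SimpleGraph.exists_fin_repetitionAtMost b N
  refine ⟨n, G, hn, fun X hX ⟨T, hTk, hTX, hT⟩ ↦ ?_⟩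
  have hX' : X.card < b * 2 ^ b := by
    exact_mod_cast hX.trans_le (mul_log_div_ten_le (by omega) hkb')
  have := hG X T hX' hTX hT
  rw [pow_succ] at hkb
  omega
end
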